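/- arXiv:2511.14091 — 8 statements merged into one kernel-verified Lean document; each statement's English description precedes it below -/
import Mathlib

section
/- Let (Ω, F, P) be a probability space and let (Z_t)_{t∈ℤ} and (Θ_t)_{t∈ℤ} be stochastic processes taking values in standard Borel spaces. Assume the parameter-driven state-space (P-SSM) conditions: (a) for every t ∈ ℤ and every bounded measurable function f, E[f(Z_t) | σ(Z_s : s ≤ t−1) ⊔ σ(Θ_s : s ≤ t)] = E[f(Z_t) | σ(Θ_t)] almost surely; (b) for every t ∈ ℤ and every bounded measurable function h, E[h(Θ_{t+1}) | σ(Z_s : s ≤ t) ⊔ σ(Θ_s : s ≤ t)] = E[h(Θ_{t+1}) | σ(Θ_t)] almost surely. Then for every t ∈ ℤ, every integer k ≥ 1, every bounded σ(Z_s : s ≤ t−k)-measurable random variable G, and all bounded measurable functions f_0, …, f_{k−1}, one has E[G · ∏_{j=0}^{k−1} f_j(Z_{t−j}) | σ(Θ_s : s ≤ t)] = E[G | σ(Θ_s : s ≤ t−k)] · ∏_{j=0}^{k−1} E[f_j(Z_{t−j}) | σ(Θ_{t−j})] almost surely. -/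
open MeasureTheory Finset

namespace PSSMAux

variable {Ω : Type*} [mΩ : MeasurableSpace Ω] {P : Measure Ω} [IsProbabilityMeasure P]

lemma integrable_of_bound (H : Ω → ℝ) (hm : AEStronglyMeasurable H P) (C : ℝ)
    (hC : ∀ᵐ ω ∂P, |H ω| ≤ C) : Integrable H P :=
  (integrable_const C).mono' hm (hC.mono fun ω h => by simpa [Real.norm_eq_abs] using h)

lemma integral_mul_condexp {m : MeasurableSpace Ω} (hm : m ≤ mΩ)
    (u w : Ω → ℝ) (hu : StronglyMeasurable[m] u) (C : ℝ) (huC : ∀ᵐ ω ∂P, |u ω| ≤ C)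
    (hw : Integrable w P) :
    ∫ ω, u ω * (P[w|m]) ω ∂P = ∫ ω, u ω * w ω ∂P := by
  have huw : Integrable (fun ω => u ω * w ω) P :=
    hw.bdd_mul (hu.mono hm).aestronglyMeasurable
      (huC.mono fun ω h => by simpa [Real.norm_eq_abs] using h)
  have h1 : P[(fun ω => u ω * w ω)|m] =ᵐ[P] fun ω => u ω * (P[w|m]) ω :=
    condExp_mul_of_stronglyMeasurable_left hu huw hw
  rw [← integral_congr_ae h1, integral_condExp hm]

lemma iSup_split (m : ℤ → MeasurableSpace Ω) (t : ℤ) :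
    (⨆ s, ⨆ _ : s ≤ t, m s) = (⨆ s, ⨆ _ : s ≤ t - 1, m s) ⊔ m t := by
  apply le_antisymm
  · refine iSup₂_le fun s hs => ?_
    rcases eq_or_lt_of_le hs with h | h
    · subst h; exact le_sup_right
    · exact le_sup_of_le_left (le_iSup₂_of_le s (by omega) le_rfl)
  · exact sup_le (iSup₂_le fun s hs => le_iSup₂_of_le s (by omega) le_rfl)
      (le_iSup₂_of_le t le_rfl le_rfl)

def piSet (m1 m2 : MeasurableSpace Ω) : Set (Set Ω) :=
  {S | ∃ A B, MeasurableSet[m1] A ∧ MeasurableSet[m2] B ∧ S = A ∩ B}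

lemma isPiSystem_piSet (m1 m2 : MeasurableSpace Ω) : IsPiSystem (piSet m1 m2) := by
  rintro _ ⟨A, B, hA, hB, rfl⟩ _ ⟨A', B', hA', hB', rfl⟩ _
  exact ⟨A ∩ A', B ∩ B', hA.inter hA', hB.inter hB', by rw [Set.inter_inter_inter_comm]⟩

lemma sup_eq_generateFrom (m1 m2 : MeasurableSpace Ω) :
    m1 ⊔ m2 = MeasurableSpace.generateFrom (piSet m1 m2) := by
  apply le_antisymm
  · refine sup_le (fun s hs => ?_) (fun s hs => ?_)
    · exact .basic _ ⟨s, Set.univ, hs, MeasurableSet.univ, (Set.inter_univ s).symm⟩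
    · exact .basic _ ⟨Set.univ, s, MeasurableSet.univ, hs, (Set.univ_inter s).symm⟩
  · refine MeasurableSpace.generateFrom_le ?_
    rintro _ ⟨A, B, hA, hB, rfl⟩
    exact ((le_sup_left : m1 ≤ m1 ⊔ m2) A hA).inter ((le_sup_right : m2 ≤ m1 ⊔ m2) B hB)

set_option maxHeartbeats 1000000 in
/-- Key lemma: if `E[h(Θt) | mZ ⊔ mΘ] = E[h(Θt) | mΘ]` for all bounded measurable `h`,
then for every bounded `mZ`-measurable `H`, `E[H | mΘ ⊔ σ(Θt)] = E[H | mΘ]`. -/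
lemma condexp_sup_comap {Ω β : Type*} (mZ mΘ : MeasurableSpace Ω) [mΩ : MeasurableSpace Ω]
    [MeasurableSpace β] {P : Measure Ω} [IsProbabilityMeasure P]
    (Θt : Ω → β) (hΘt : Measurable Θt) (hmZ : mZ ≤ mΩ) (hmΘ : mΘ ≤ mΩ)
    (hcond : ∀ h : β → ℝ, Measurable h → (∃ C, ∀ x, |h x| ≤ C) →
      P[(fun ω => h (Θt ω)) | mZ ⊔ mΘ] =ᵐ[P] P[(fun ω => h (Θt ω)) | mΘ])
    (H : Ω → ℝ) (hHm : StronglyMeasurable[mZ] H) (C : ℝ) (hHC : ∀ ω, |H ω| ≤ C) :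
    P[H | mΘ ⊔ MeasurableSpace.comap Θt inferInstance] =ᵐ[P] P[H | mΘ] := by
  have hmJ : mΘ ⊔ MeasurableSpace.comap Θt inferInstance ≤ mΩ := sup_le hmΘ hΘt.comap_le
  have hHint : Integrable H P :=
    integrable_of_bound (P := P) H (hHm.mono hmZ).aestronglyMeasurable C (.of_forall hHC)
  have hgC : ∀ᵐ ω ∂P, |(P[H|mΘ]) ω| ≤ max C 0 := by
    have : ∀ᵐ ω ∂P, |H ω| ≤ ((max C 0).toNNReal : ℝ) := by
      refine .of_forall fun ω => (hHC ω).trans ?_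
      rw [Real.coe_toNNReal _ (le_max_right _ _)]
      exact le_max_left _ _
    have h2 := ae_bdd_condExp_of_ae_bdd (m := mΘ) (μ := P) this
    refine h2.mono fun ω h => h.trans ?_
    rw [Real.coe_toNNReal _ (le_max_right _ _)]
  refine (ae_eq_condExp_of_forall_setIntegral_eq hmJ hHint
    (fun s _ _ => integrable_condExp.integrableOn) (fun s hs _ => ?_)
    ⟨P[H|mΘ], stronglyMeasurable_condExp.mono le_sup_left, Filter.EventuallyEq.rfl⟩).symm
  -- show ∫ in s, E[H|mΘ] = ∫ in s, H for all s ∈ mJ, by π-system induction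
  have hgen : mΘ ⊔ MeasurableSpace.comap Θt inferInstance
      = MeasurableSpace.generateFrom (piSet mΘ (MeasurableSpace.comap Θt inferInstance)) :=
    sup_eq_generateFrom _ _
  refine MeasurableSpace.induction_on_inter
    (C := fun S _ => ∫ x in S, (P[H|mΘ]) x ∂P = ∫ x in S, H x ∂P) (m := mΘ ⊔ MeasurableSpace.comap Θt inferInstance) hgen
    (isPiSystem_piSet _ _) (by simp) ?_ ?_ ?_ s hs
  · -- basic: S = A ∩ Θt⁻¹' Cs
    rintro _ ⟨A, _, hA, ⟨Cs, hCs, rfl⟩, rfl⟩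
    set W : Ω → ℝ := fun ω => Set.indicator Cs (fun _ => (1:ℝ)) (Θt ω) with hW_def
    have hWbd : ∀ ω, |W ω| ≤ 1 := by
      intro ω; by_cases h : Θt ω ∈ Cs <;> simp [hW_def, Set.indicator_apply, h]
    have hWmeas : Measurable W := (measurable_const.indicator hCs).comp hΘt
    have hWint : Integrable W P :=
      integrable_of_bound (P := P) W hWmeas.aestronglyMeasurable 1 (.of_forall hWbd)
    have hψ : P[W | mZ ⊔ mΘ] =ᵐ[P] P[W | mΘ] :=
      hcond (Set.indicator Cs fun _ => (1:ℝ))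
        (measurable_const.indicator hCs)
        ⟨1, fun x => by by_cases h : x ∈ Cs <;> simp [Set.indicator_apply, h]⟩
    have hψbd : ∀ᵐ ω ∂P, |(P[W|mΘ]) ω| ≤ 1 := by
      have : ∀ᵐ ω ∂P, |W ω| ≤ ((1 : NNReal) : ℝ) := .of_forall (by simpa using hWbd)
      simpa using ae_bdd_condExp_of_ae_bdd (m := mΘ) (μ := P) this
    set IA : Ω → ℝ := Set.indicator A (fun _ => (1:ℝ)) with hIA_def
    have hIAm : StronglyMeasurable[mΘ] IA := stronglyMeasurable_const.indicator hA
    have hIAbd : ∀ ω, |IA ω| ≤ 1 := by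
      intro ω; by_cases h : ω ∈ A <;> simp [hIA_def, Set.indicator_apply, h]
    have hSmeas : MeasurableSet (A ∩ Θt ⁻¹' Cs) := (hmΘ A hA).inter (hΘt hCs)
    have hrw : ∀ v : Ω → ℝ, ∫ x in A ∩ Θt ⁻¹' Cs, v x ∂P = ∫ x, IA x * (W x * v x) ∂P := by
      intro v
      rw [← integral_indicator hSmeas]
      congr 1; funext x
      by_cases hxA : x ∈ A <;> by_cases hxB : Θt x ∈ Cs <;>
        simp [Set.indicator_apply, hxA, hxB, hIA_def, hW_def]
    rw [hrw, hrw]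
    have hHm' : StronglyMeasurable[mZ ⊔ mΘ] H := hHm.mono le_sup_left
    -- step 1: ∫ (IA*H)*W = ∫ (IA*H)*E[W|mZ⊔mΘ] = ∫ (IA*H)*E[W|mΘ]
    have e1 : ∫ x, IA x * (W x * H x) ∂P = ∫ x, (IA x * H x) * (P[W|mΘ]) x ∂P := by
      have hu1' : StronglyMeasurable[mZ ⊔ mΘ] (IA * H) :=
        (hIAm.mono (le_sup_right : mΘ ≤ mZ ⊔ mΘ)).mul hHm'
      have hu1 : StronglyMeasurable[mZ ⊔ mΘ] (fun x => IA x * H x) := hu1'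
      have := integral_mul_condexp (P := P) (sup_le hmZ hmΘ) (fun x => IA x * H x) W
        hu1 (1 * C)
        (.of_forall fun ω => by
          rw [abs_mul]
          exact mul_le_mul (hIAbd ω) (hHC ω) (abs_nonneg _) zero_le_one) hWint
      rw [← integral_congr_ae (show (fun x => (IA x * H x) * (P[W|mZ ⊔ mΘ]) x) =ᵐ[P] fun x => (IA x * H x) * (P[W|mΘ]) x from Filter.EventuallyEq.mul (.refl _ _) hψ), this]
      exact integral_congr_ae (.of_forall fun x => by ring)
    -- step 2: ∫ (IA*ψ)*H = ∫ (IA*ψ)*E[H|mΘ]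
    have e2 : ∫ x, (IA x * H x) * (P[W|mΘ]) x ∂P
        = ∫ x, (IA x * (P[H|mΘ]) x) * (P[W|mΘ]) x ∂P := by
      have hu2' : StronglyMeasurable[mΘ] (IA * P[W|mΘ]) :=
        hIAm.mul stronglyMeasurable_condExp
      have hu2 : StronglyMeasurable[mΘ] (fun x => IA x * (P[W|mΘ]) x) := hu2'
      have := integral_mul_condexp (P := P) hmΘ (fun x => IA x * (P[W|mΘ]) x) H
        hu2 (1 * 1)
        (hψbd.mono fun ω h => by
          rw [abs_mul]
          exact mul_le_mul (hIAbd ω) h (abs_nonneg _) zero_le_one) hHint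
      rw [show (∫ x, (IA x * H x) * (P[W|mΘ]) x ∂P)
          = ∫ x, (IA x * (P[W|mΘ]) x) * H x ∂P from
        integral_congr_ae (.of_forall fun x => by ring), ← this]
      exact integral_congr_ae (.of_forall fun x => by ring)
    -- step 3: ∫ (IA*g)*E[W|mΘ] = ∫ (IA*g)*W
    have e3 : ∫ x, (IA x * (P[H|mΘ]) x) * (P[W|mΘ]) x ∂P
        = ∫ x, IA x * (W x * (P[H|mΘ]) x) ∂P := by
      have hu3' : StronglyMeasurable[mΘ] (IA * P[H|mΘ]) :=
        hIAm.mul stronglyMeasurable_condExp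
      have hu3 : StronglyMeasurable[mΘ] (fun x => IA x * (P[H|mΘ]) x) := hu3'
      have := integral_mul_condexp (P := P) hmΘ (fun x => IA x * (P[H|mΘ]) x) W
        hu3 (1 * max C 0)
        (hgC.mono fun ω h => by
          rw [abs_mul]
          exact mul_le_mul (hIAbd ω) h (abs_nonneg _) zero_le_one) hWint
      rw [this]
      exact integral_congr_ae (.of_forall fun x => by ring)
    rw [e3.symm, ← e2, ← e1]
  · -- complement
    intro S hSJ hS
    have hS' : MeasurableSet S := hmJ S hSJ
    have h1 := integral_add_compl hS' hHint
    have h2 := integral_add_compl hS' (integrable_condExp (f := H) (m := mΘ) (μ := P))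
    have h3 : ∫ x, (P[H|mΘ]) x ∂P = ∫ x, H x ∂P := integral_condExp hmΘ
    linarith
  · -- countable disjoint union
    intro F hdisj hFm hCF
    have hFm' : ∀ i, MeasurableSet (F i) := fun i => hmJ _ (hFm i)
    rw [integral_iUnion hFm' hdisj integrable_condExp.integrableOn,
      integral_iUnion hFm' hdisj hHint.integrableOn]
    exact tsum_congr hCF

end PSSMAux

/-- **Factorization of the conditional law of the observations for a P-SSM
(Theorem 2.1 of the paper), in conditional-expectation form.**
Under the P-SSM conditions (a) and (b), for every `t ∈ ℤ`, `k ≥ 1`, every bounded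
`σ(Z_s : s ≤ t−k)`-measurable `G` and all bounded measurable `f_0, …, f_{k−1}`,
`E[G ∏_{j<k} f_j(Z_{t−j}) | σ(Θ_s : s ≤ t)]
  = E[G | σ(Θ_s : s ≤ t−k)] ∏_{j<k} E[f_j(Z_{t−j}) | σ(Θ_{t−j})]` a.s. -/
theorem stmt_0 {Ω : Type*} [mΩ : MeasurableSpace Ω] (P : Measure Ω) [IsProbabilityMeasure P]
    {α β : Type*} [MeasurableSpace α] [StandardBorelSpace α]
    [MeasurableSpace β] [StandardBorelSpace β]
    (Z : ℤ → Ω → α) (Θ : ℤ → Ω → β)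
    (hZmeas : ∀ t, Measurable (Z t)) (hΘmeas : ∀ t, Measurable (Θ t))
    (σZ σΘ : ℤ → MeasurableSpace Ω)
    (hσZ : ∀ t, σZ t = ⨆ s, ⨆ _ : s ≤ t, MeasurableSpace.comap (Z s) inferInstance)
    (hσΘ : ∀ t, σΘ t = ⨆ s, ⨆ _ : s ≤ t, MeasurableSpace.comap (Θ s) inferInstance)
    (hobs : ∀ (t : ℤ) (f : α → ℝ), Measurable f → (∃ C, ∀ x, |f x| ≤ C) →
      P[(fun ω => f (Z t ω)) | σZ (t - 1) ⊔ σΘ t]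
        =ᵐ[P] P[(fun ω => f (Z t ω)) | MeasurableSpace.comap (Θ t) inferInstance])
    (hevol : ∀ (t : ℤ) (h : β → ℝ), Measurable h → (∃ C, ∀ x, |h x| ≤ C) →
      P[(fun ω => h (Θ (t + 1) ω)) | σZ t ⊔ σΘ t]
        =ᵐ[P] P[(fun ω => h (Θ (t + 1) ω)) | MeasurableSpace.comap (Θ t) inferInstance]) :
    ∀ (t : ℤ) (k : ℕ), 1 ≤ k →
      ∀ G : Ω → ℝ, StronglyMeasurable[σZ (t - k)] G → (∃ C, ∀ ω, |G ω| ≤ C) →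
      ∀ f : ℕ → α → ℝ, (∀ j < k, Measurable (f j)) → (∀ j < k, ∃ C, ∀ x, |f j x| ≤ C) →
        P[(fun ω => G ω * ∏ j ∈ Finset.range k, f j (Z (t - (j : ℤ)) ω)) | σΘ t]
          =ᵐ[P] fun ω => (P[G | σΘ (t - k)]) ω
            * ∏ j ∈ Finset.range k,
                (P[(fun ω' => f j (Z (t - (j : ℤ)) ω'))
                  | MeasurableSpace.comap (Θ (t - (j : ℤ))) inferInstance]) ω := by
  -- preliminary facts about the filtrations
  have hσZle : ∀ u, σZ u ≤ mΩ := fun u => by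
    rw [hσZ]; exact iSup₂_le fun s _ => (hZmeas s).comap_le
  have hσΘle : ∀ u, σΘ u ≤ mΩ := fun u => by
    rw [hσΘ]; exact iSup₂_le fun s _ => (hΘmeas s).comap_le
  have hσZmono : ∀ {u v : ℤ}, u ≤ v → σZ u ≤ σZ v := fun {u v} h => by
    rw [hσZ, hσZ]; exact iSup₂_le fun s hs => le_iSup₂_of_le s (hs.trans h) le_rfl
  have hcomapΘ : ∀ {s u : ℤ}, s ≤ u →
      MeasurableSpace.comap (Θ s) inferInstance ≤ σΘ u := fun {s u} h => by
    rw [hσΘ]; exact le_iSup₂_of_le s h le_rfl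
  have hcomapZ : ∀ {s u : ℤ}, s ≤ u →
      MeasurableSpace.comap (Z s) inferInstance ≤ σZ u := fun {s u} h => by
    rw [hσZ]; exact le_iSup₂_of_le s h le_rfl
  have hΘsplit : ∀ u : ℤ, σΘ u = σΘ (u - 1) ⊔ MeasurableSpace.comap (Θ u) inferInstance :=
    fun u => by rw [hσΘ, hσΘ]; exact PSSMAux.iSup_split _ u
  have hZSM : ∀ (s : ℤ) (g : α → ℝ), Measurable g →
      StronglyMeasurable[MeasurableSpace.comap (Z s) inferInstance] (fun ω => g (Z s ω)) :=
    fun s g hg => ((hg.comp (Measurable.of_comap_le le_rfl)).stronglyMeasurable :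
      StronglyMeasurable[MeasurableSpace.comap (Z s) inferInstance] (g ∘ Z s))
  -- the Markov-evolution condition, with the full past of Θ on the right
  have hcondΘ : ∀ (u : ℤ) (h : β → ℝ), Measurable h → (∃ C, ∀ x, |h x| ≤ C) →
      P[(fun ω => h (Θ u ω)) | σZ (u - 1) ⊔ σΘ (u - 1)]
        =ᵐ[P] P[(fun ω => h (Θ u ω)) | σΘ (u - 1)] := by
    intro u h hh hbd
    have h0 := hevol (u - 1) h hh hbd
    have hu : u - 1 + 1 = u := by ring
    rw [hu] at h0
    have h2 : P[P[(fun ω => h (Θ u ω)) | σZ (u - 1) ⊔ σΘ (u - 1)] | σΘ (u - 1)]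
        =ᵐ[P] P[(fun ω => h (Θ u ω)) | σΘ (u - 1)] :=
      condExp_condExp_of_le le_sup_right (sup_le (hσZle _) (hσΘle _))
    have h3 := condExp_congr_ae (m := σΘ (u - 1)) (μ := P) h0
    have h4 : P[P[(fun ω => h (Θ u ω)) | MeasurableSpace.comap (Θ (u - 1)) inferInstance]
          | σΘ (u - 1)]
        = P[(fun ω => h (Θ u ω)) | MeasurableSpace.comap (Θ (u - 1)) inferInstance] :=
      condExp_of_stronglyMeasurable (hσΘle _)
        (stronglyMeasurable_condExp.mono (hcomapΘ le_rfl)) integrable_condExp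
    have h5 : P[(fun ω => h (Θ u ω)) | σΘ (u - 1)]
        =ᵐ[P] P[(fun ω => h (Θ u ω)) | MeasurableSpace.comap (Θ (u - 1)) inferInstance] := by
      refine (h2.symm.trans h3).trans ?_
      rw [h4]
    exact h0.trans h5.symm
  -- main induction on k
  have main : ∀ (k : ℕ) (t : ℤ) (G : Ω → ℝ),
      StronglyMeasurable[σZ (t - (k : ℤ))] G → (∃ C, ∀ ω, |G ω| ≤ C) →
      ∀ f : ℕ → α → ℝ, (∀ j < k, Measurable (f j)) → (∀ j < k, ∃ C, ∀ x, |f j x| ≤ C) →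
      P[(fun ω => G ω * ∏ j ∈ Finset.range k, f j (Z (t - (j : ℤ)) ω)) | σΘ t]
        =ᵐ[P] fun ω => (P[G | σΘ (t - (k : ℤ))]) ω
          * ∏ j ∈ Finset.range k,
              (P[(fun ω' => f j (Z (t - (j : ℤ)) ω'))
                | MeasurableSpace.comap (Θ (t - (j : ℤ))) inferInstance]) ω := by
    intro k
    induction k with
    | zero =>
      intro t G hGm _ f _ _
      simp only [Finset.range_zero, Finset.prod_empty, mul_one, Nat.cast_zero, sub_zero]
      exact Filter.EventuallyEq.rfl
    | succ k ih =>
      intro t G hGm hGbd f hfm hfbd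
      obtain ⟨CG, hCG⟩ := hGbd
      have hcast : t - ((k + 1 : ℕ) : ℤ) = t - 1 - (k : ℤ) := by push_cast; ring
      have hGm' : StronglyMeasurable[σZ (t - 1 - (k : ℤ))] G := by rwa [hcast] at hGm
      have hGm1 : StronglyMeasurable[σZ (t - 1)] G := hGm'.mono (hσZmono (by omega))
      -- total bound functions for f
      have hfbd' : ∀ j, ∃ C, j < k + 1 → ∀ x, |f j x| ≤ C := by
        intro j
        by_cases h : j < k + 1
        · exact ⟨(hfbd j h).choose, fun _ => (hfbd j h).choose_spec⟩
        · exact ⟨0, fun h' => absurd h' h⟩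
      choose Cf hCf using hfbd'
      -- strong measurability of the product part wrt σZ (t-1)
      have hprodSM : StronglyMeasurable[σZ (t - 1)]
          (fun ω => ∏ j ∈ Finset.range k, f (j + 1) (Z (t - 1 - (j : ℤ)) ω)) := by
        refine Finset.stronglyMeasurable_fun_prod _ fun j hj => ?_
        simp only [Finset.mem_range] at hj
        exact (hZSM (t - 1 - (j : ℤ)) (f (j + 1)) (hfm (j + 1) (by omega))).mono
          (hcomapZ (by omega))
      have hHm : StronglyMeasurable[σZ (t - 1)]
          (fun ω => G ω * ∏ j ∈ Finset.range k, f (j + 1) (Z (t - 1 - (j : ℤ)) ω)) :=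
        hGm1.mul hprodSM
      set CH : ℝ := max CG 0 * ∏ j ∈ Finset.range k, max (Cf (j + 1)) 0 with hCH_def
      have hHbd : ∀ ω, |G ω * ∏ j ∈ Finset.range k, f (j + 1) (Z (t - 1 - (j : ℤ)) ω)| ≤ CH := by
        intro ω
        rw [abs_mul]
        refine mul_le_mul ((hCG ω).trans (le_max_left _ _)) ?_ (abs_nonneg _) (le_max_right _ _)
        rw [Finset.abs_prod]
        refine Finset.prod_le_prod (fun j _ => abs_nonneg _) (fun j hj => ?_)
        refine (hCf (j + 1) ?_ _).trans (le_max_left _ _)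
        simp only [Finset.mem_range] at hj
        omega
      have hHint : Integrable
          (fun ω => G ω * ∏ j ∈ Finset.range k, f (j + 1) (Z (t - 1 - (j : ℤ)) ω)) P :=
        PSSMAux.integrable_of_bound (P := P) _
          ((hHm.mono (hσZle _)).aestronglyMeasurable) CH (.of_forall hHbd)
      have hFmeas : Measurable (fun ω => f 0 (Z t ω)) := (hfm 0 (by omega)).comp (hZmeas t)
      have hFbd : ∀ ω, |f 0 (Z t ω)| ≤ max (Cf 0) 0 :=
        fun ω => (hCf 0 (by omega) _).trans (le_max_left _ _)
      have hFint : Integrable (fun ω => f 0 (Z t ω)) P :=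
        PSSMAux.integrable_of_bound (P := P) _ hFmeas.aestronglyMeasurable _ (.of_forall hFbd)
      have hHFint : Integrable
          (fun ω => (G ω * ∏ j ∈ Finset.range k, f (j + 1) (Z (t - 1 - (j : ℤ)) ω))
            * f 0 (Z t ω)) P :=
        hFint.bdd_mul (hHm.mono (hσZle _)).aestronglyMeasurable
          (.of_forall fun ω => by rw [Real.norm_eq_abs]; exact hHbd ω)
      -- pull-out and the observation condition
      have hmJ : σZ (t - 1) ⊔ σΘ t ≤ mΩ := sup_le (hσZle _) (hσΘle _)
      have step1 : P[(fun ω =>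
            (G ω * ∏ j ∈ Finset.range k, f (j + 1) (Z (t - 1 - (j : ℤ)) ω)) * f 0 (Z t ω))
            | σΘ t]
          =ᵐ[P] P[P[(fun ω =>
            (G ω * ∏ j ∈ Finset.range k, f (j + 1) (Z (t - 1 - (j : ℤ)) ω)) * f 0 (Z t ω))
              | σZ (t - 1) ⊔ σΘ t] | σΘ t] :=
        (condExp_condExp_of_le le_sup_right hmJ).symm
      have hpull : P[(fun ω =>
            (G ω * ∏ j ∈ Finset.range k, f (j + 1) (Z (t - 1 - (j : ℤ)) ω)) * f 0 (Z t ω))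
              | σZ (t - 1) ⊔ σΘ t]
          =ᵐ[P] fun ω =>
            (G ω * ∏ j ∈ Finset.range k, f (j + 1) (Z (t - 1 - (j : ℤ)) ω))
              * (P[(fun ω' => f 0 (Z t ω')) | σZ (t - 1) ⊔ σΘ t]) ω :=
        condExp_mul_of_stronglyMeasurable_left (hHm.mono le_sup_left) hHFint hFint
      have hobs0 : P[(fun ω' => f 0 (Z t ω')) | σZ (t - 1) ⊔ σΘ t]
          =ᵐ[P] P[(fun ω' => f 0 (Z t ω')) | MeasurableSpace.comap (Θ t) inferInstance] :=
        hobs t (f 0) (hfm 0 (by omega)) ⟨Cf 0, hCf 0 (by omega)⟩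
      have hg0sm : StronglyMeasurable[σΘ t]
          (P[(fun ω' => f 0 (Z t ω')) | MeasurableSpace.comap (Θ t) inferInstance]) :=
        stronglyMeasurable_condExp.mono (hcomapΘ le_rfl)
      have hg0bd : ∀ᵐ ω ∂P,
          |(P[(fun ω' => f 0 (Z t ω')) | MeasurableSpace.comap (Θ t) inferInstance]) ω|
            ≤ max (Cf 0) 0 := by
        have hb : ∀ᵐ ω ∂P, |f 0 (Z t ω)| ≤ ((max (Cf 0) 0).toNNReal : ℝ) := by
          refine .of_forall fun ω => (hFbd ω).trans ?_
          rw [Real.coe_toNNReal _ (le_max_right _ _)]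
        have h2 := ae_bdd_condExp_of_ae_bdd
          (m := MeasurableSpace.comap (Θ t) inferInstance) (μ := P) hb
        refine h2.mono fun ω h => h.trans ?_
        rw [Real.coe_toNNReal _ (le_max_right _ _)]
      have hg0Hint : Integrable (fun ω =>
          (P[(fun ω' => f 0 (Z t ω')) | MeasurableSpace.comap (Θ t) inferInstance]) ω
            * (G ω * ∏ j ∈ Finset.range k, f (j + 1) (Z (t - 1 - (j : ℤ)) ω))) P :=
        hHint.bdd_mul ((hg0sm.mono (hσΘle _)).aestronglyMeasurable)
          (hg0bd.mono fun ω h => by rw [Real.norm_eq_abs]; exact h)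
      have step2 : P[P[(fun ω =>
            (G ω * ∏ j ∈ Finset.range k, f (j + 1) (Z (t - 1 - (j : ℤ)) ω)) * f 0 (Z t ω))
              | σZ (t - 1) ⊔ σΘ t] | σΘ t]
          =ᵐ[P] P[(fun ω =>
            (P[(fun ω' => f 0 (Z t ω')) | MeasurableSpace.comap (Θ t) inferInstance]) ω
              * (G ω * ∏ j ∈ Finset.range k, f (j + 1) (Z (t - 1 - (j : ℤ)) ω))) | σΘ t] := by
        refine condExp_congr_ae (hpull.trans ?_)
        filter_upwards [hobs0] with ω h
        rw [h]; ring
      have step3 : P[(fun ω =>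
            (P[(fun ω' => f 0 (Z t ω')) | MeasurableSpace.comap (Θ t) inferInstance]) ω
              * (G ω * ∏ j ∈ Finset.range k, f (j + 1) (Z (t - 1 - (j : ℤ)) ω))) | σΘ t]
          =ᵐ[P] fun ω =>
            (P[(fun ω' => f 0 (Z t ω')) | MeasurableSpace.comap (Θ t) inferInstance]) ω
              * (P[(fun ω => G ω * ∏ j ∈ Finset.range k, f (j + 1) (Z (t - 1 - (j : ℤ)) ω))
                  | σΘ t]) ω :=
        condExp_mul_of_stronglyMeasurable_left hg0sm hg0Hint hHint
      -- conditional independence step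
      have hkey : P[(fun ω => G ω * ∏ j ∈ Finset.range k, f (j + 1) (Z (t - 1 - (j : ℤ)) ω))
            | σΘ t]
          =ᵐ[P] P[(fun ω => G ω * ∏ j ∈ Finset.range k, f (j + 1) (Z (t - 1 - (j : ℤ)) ω))
            | σΘ (t - 1)] := by
        rw [hΘsplit t]
        exact PSSMAux.condexp_sup_comap (σZ (t - 1)) (σΘ (t - 1)) (Θ t) (hΘmeas t)
          (hσZle _) (hσΘle _) (hcondΘ t) _ hHm CH hHbd
      -- induction hypothesis at time t - 1
      have hih : P[(fun ω => G ω * ∏ j ∈ Finset.range k, f (j + 1) (Z (t - 1 - (j : ℤ)) ω))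
            | σΘ (t - 1)]
          =ᵐ[P] fun ω => (P[G | σΘ (t - 1 - (k : ℤ))]) ω
            * ∏ j ∈ Finset.range k,
                (P[(fun ω' => f (j + 1) (Z (t - 1 - (j : ℤ)) ω'))
                  | MeasurableSpace.comap (Θ (t - 1 - (j : ℤ))) inferInstance]) ω :=
        ih (t - 1) G hGm' ⟨CG, hCG⟩ (fun j => f (j + 1))
          (fun j hj => hfm (j + 1) (by omega)) (fun j hj => ⟨Cf (j + 1), hCf (j + 1) (by omega)⟩)
      -- rewrite the function inside the conditional expectation
      have hfun : (fun ω => G ω * ∏ j ∈ Finset.range (k + 1), f j (Z (t - (j : ℤ)) ω))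
          = fun ω => (G ω * ∏ j ∈ Finset.range k, f (j + 1) (Z (t - 1 - (j : ℤ)) ω))
              * f 0 (Z t ω) := by
        funext ω
        rw [Finset.prod_range_succ']
        have harith2 : ∀ j : ℕ, t - ((j : ℤ) + 1) = t - 1 - (j : ℤ) := fun j => by ring
        simp only [Nat.cast_add, Nat.cast_one, CharP.cast_eq_zero, sub_zero, harith2]
        ring
      -- rewrite the RHS of the goal
      have hRHS : (fun ω => (P[G | σΘ (t - ((k + 1 : ℕ) : ℤ))]) ω
            * ∏ j ∈ Finset.range (k + 1),
                (P[(fun ω' => f j (Z (t - (j : ℤ)) ω'))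
                  | MeasurableSpace.comap (Θ (t - (j : ℤ))) inferInstance]) ω)
          = fun ω =>
            (P[(fun ω' => f 0 (Z t ω')) | MeasurableSpace.comap (Θ t) inferInstance]) ω
              * ((P[G | σΘ (t - 1 - (k : ℤ))]) ω
                * ∏ j ∈ Finset.range k,
                    (P[(fun ω' => f (j + 1) (Z (t - 1 - (j : ℤ)) ω'))
                      | MeasurableSpace.comap (Θ (t - 1 - (j : ℤ))) inferInstance]) ω) := by
        funext ω
        rw [Finset.prod_range_succ']
        have harith2 : ∀ j : ℕ, t - ((j : ℤ) + 1) = t - 1 - (j : ℤ) := fun j => by ring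
        simp only [Nat.cast_add, Nat.cast_one, CharP.cast_eq_zero, sub_zero, harith2, hcast]
        ring
      rw [hfun, hRHS]
      refine step1.trans (step2.trans (step3.trans ?_))
      filter_upwards [hkey, hih] with ω h1 h2
      rw [h1, h2]
  intro t k _ G hGm hGbd f hfm hfbd
  exact main k t G hGm hGbd f hfm hfbd
end

section
/- Let (Ω, F, P) be a probability space and let (Z_t)_{t∈ℤ} and (Θ_t)_{t∈ℤ} be real-valued processes with E[Z_t²] < ∞ and E[Θ_t²] < ∞ for all t. Define G_t := σ(Z_s, Θ_s : s ≤ t) and H_u := σ(Z_s : s ≤ u−1) ⊔ σ(Θ_s : s ≤ u). Suppose there are real constants (Δ_t)_{t∈ℤ}, (c_t)_{t∈ℤ} and (λ_t)_{t∈ℤ} such that for every t ∈ ℤ: E[Θ_{t+1} | G_t] = Δ_t Θ_t + c_t almost surely, and E[Z_t | H_t] = λ_t Θ_t almost surely. Then for every t ∈ ℤ and every integer k ≥ 1, Cov(Z_t, Z_{t+k}) = λ_t λ_{t+k} (∏_{j=0}^{k−1} Δ_{t+j}) Var(Θ_t); in particular Cov(Z_t, Z_{t+k}) = λ_t λ_{t+k}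 Cov(Θ_t, Θ_{t+k}). -/
open MeasureTheory ProbabilityTheory Finset

private lemma l2_mul_integrable {Ω : Type*} {mΩ : MeasurableSpace Ω} {P : Measure Ω}
    {X Y : Ω → ℝ} (hX : MemLp X 2 P) (hY : MemLp Y 2 P) :
    Integrable (fun ω => X ω * Y ω) P := by
  have h : MemLp (X • Y) 1 P := hY.smul hX (hpqr := ⟨by rw [inv_one, ENNReal.inv_two_add_inv_two]⟩)
  exact memLp_one_iff_integrable.mp h

/-- Tower/pull-out step: if `X` is `m`-strongly-measurable and `E[Y|m] = g` a.e., then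
`∫ X Y = ∫ X g`. -/
private lemma tower_mul {Ω : Type*} [mΩ : MeasurableSpace Ω] {P : Measure Ω}
    [IsProbabilityMeasure P] {m : MeasurableSpace Ω} (hm : m ≤ mΩ)
    {X Y g : Ω → ℝ} (hX : MemLp X 2 P) (hY : MemLp Y 2 P) (hg : MemLp g 2 P)
    (hXm : StronglyMeasurable[m] X) (hcond : P[Y | m] =ᵐ[P] g) :
    ∫ ω, X ω * Y ω ∂P = ∫ ω, X ω * g ω ∂P := by
  have hXY : Integrable (fun ω => X ω * Y ω) P := l2_mul_integrable hX hY
  have hXg : Integrable (fun ω => X ω * g ω) P := l2_mul_integrable hX hg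
  have h1 : ∫ ω, X ω * Y ω ∂P = ∫ ω, (P[fun ω => X ω * Y ω | m]) ω ∂P :=
    (integral_condExp hm).symm
  rw [h1]
  have h2 : P[fun ω => X ω * Y ω | m] =ᵐ[P] fun ω => X ω * (P[Y | m]) ω :=
    condExp_mul_of_stronglyMeasurable_left hXm hXY (hY.integrable one_le_two)
  refine integral_congr_ae (h2.trans ?_)
  filter_upwards [hcond] with ω hω
  simp [hω]

/-- Covariance expansion. -/
private lemma cov_expand {Ω : Type*} [MeasurableSpace Ω] {P : Measure Ω}
    [IsProbabilityMeasure P] {X Y : Ω → ℝ} (hX : MemLp X 2 P) (hY : MemLp Y 2 P) :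
    ∫ ω, (X ω - ∫ ω', X ω' ∂P) * (Y ω - ∫ ω', Y ω' ∂P) ∂P
      = (∫ ω, X ω * Y ω ∂P) - (∫ ω, X ω ∂P) * (∫ ω, Y ω ∂P) := by
  have hXi : Integrable X P := hX.integrable one_le_two
  have hYi : Integrable Y P := hY.integrable one_le_two
  have hXY : Integrable (fun ω => X ω * Y ω) P := l2_mul_integrable hX hY
  set a := ∫ ω', X ω' ∂P with ha
  set b := ∫ ω', Y ω' ∂P with hb
  have hfun : (fun ω => (X ω - a) * (Y ω - b))
      = fun ω => X ω * Y ω - (a * Y ω + b * X ω - a * b) := by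
    funext ω; ring
  have hIa : Integrable (fun ω => a * Y ω) P := hYi.const_mul a
  have hIb : Integrable (fun ω => b * X ω) P := hXi.const_mul b
  have hIab : Integrable (fun _ : Ω => a * b) P := integrable_const (a * b)
  have hI2 : Integrable (fun ω => a * Y ω + b * X ω) P := hIa.add hIb
  have hI : Integrable (fun ω => a * Y ω + b * X ω - a * b) P := hI2.sub hIab
  rw [hfun, integral_sub hXY hI, integral_sub hI2 hIab, integral_add hIa hIb,
    integral_const_mul, integral_const_mul, integral_const]
  simp only [measure_univ, probReal_univ, ENNReal.toReal_one, smul_eq_mul, one_mul, ← ha, ← hb]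
  ring

/-- **Serial covariance of the observations in an O-LSSM (part ii of Lemma 2.1).**
With `G_t = σ(Z_s, Θ_s : s ≤ t)` and `H_u = σ(Z_s : s ≤ u−1) ⊔ σ(Θ_s : s ≤ u)`, if
`E[Θ_{t+1} | G_t] = Δ_t Θ_t + c_t` a.s. and `E[Z_t | H_t] = λ_t Θ_t` a.s. for all `t`,
then `Cov(Z_t, Z_{t+k}) = λ_t λ_{t+k} (∏_{j=0}^{k−1} Δ_{t+j}) Var(Θ_t)
  = λ_t λ_{t+k} Cov(Θ_t, Θ_{t+k})` for all `t ∈ ℤ`, `k ≥ 1`. -/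
theorem stmt_3 {Ω : Type*} [mΩ : MeasurableSpace Ω] (P : Measure Ω) [IsProbabilityMeasure P]
    (Z Θ : ℤ → Ω → ℝ) (Δ c lam : ℤ → ℝ)
    (hZmeas : ∀ t, Measurable (Z t)) (hΘmeas : ∀ t, Measurable (Θ t))
    (hZL2 : ∀ t, MemLp (Z t) 2 P) (hΘL2 : ∀ t, MemLp (Θ t) 2 P)
    (G H : ℤ → MeasurableSpace Ω)
    (hG : ∀ t, G t = (⨆ s, ⨆ _ : s ≤ t, MeasurableSpace.comap (Z s) inferInstance)
      ⊔ (⨆ s, ⨆ _ : s ≤ t, MeasurableSpace.comap (Θ s) inferInstance))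
    (hH : ∀ u, H u = (⨆ s, ⨆ _ : s ≤ u - 1, MeasurableSpace.comap (Z s) inferInstance)
      ⊔ (⨆ s, ⨆ _ : s ≤ u, MeasurableSpace.comap (Θ s) inferInstance))
    (hrec : ∀ t : ℤ, P[Θ (t + 1) | G t] =ᵐ[P] fun ω => Δ t * Θ t ω + c t)
    (hobs : ∀ t : ℤ, P[Z t | H t] =ᵐ[P] fun ω => lam t * Θ t ω) :
    ∀ (t : ℤ) (k : ℕ), 1 ≤ k →
      (∫ ω, (Z t ω - ∫ ω', Z t ω' ∂P) * (Z (t + k) ω - ∫ ω', Z (t + k) ω' ∂P) ∂P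
          = lam t * lam (t + k) * (∏ j ∈ Finset.range k, Δ (t + j)) * variance (Θ t) P)
      ∧ (∫ ω, (Z t ω - ∫ ω', Z t ω' ∂P) * (Z (t + k) ω - ∫ ω', Z (t + k) ω' ∂P) ∂P
          = lam t * lam (t + k)
            * ∫ ω, (Θ t ω - ∫ ω', Θ t ω' ∂P) * (Θ (t + k) ω - ∫ ω', Θ (t + k) ω' ∂P) ∂P) := by
  -- sub-σ-algebra facts
  have hGle : ∀ s, G s ≤ mΩ := by
    intro s; rw [hG]
    exact sup_le (iSup₂_le fun u _ => (hZmeas u).comap_le)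
      (iSup₂_le fun u _ => (hΘmeas u).comap_le)
  have hHle : ∀ u, H u ≤ mΩ := by
    intro u; rw [hH]
    exact sup_le (iSup₂_le fun s _ => (hZmeas s).comap_le)
      (iSup₂_le fun s _ => (hΘmeas s).comap_le)
  have hZG : ∀ s u : ℤ, s ≤ u → StronglyMeasurable[G u] (Z s) := by
    intro s u hsu
    refine Measurable.stronglyMeasurable (Measurable.mono
      (Measurable.of_comap_le le_rfl : Measurable[MeasurableSpace.comap (Z s) inferInstance] (Z s)) ?_ le_rfl)
    rw [hG]
    exact le_sup_of_le_left (le_iSup_of_le s (le_iSup_of_le hsu le_rfl))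
  have hΘG : ∀ s u : ℤ, s ≤ u → StronglyMeasurable[G u] (Θ s) := by
    intro s u hsu
    refine Measurable.stronglyMeasurable (Measurable.mono
      (Measurable.of_comap_le le_rfl : Measurable[MeasurableSpace.comap (Θ s) inferInstance] (Θ s)) ?_ le_rfl)
    rw [hG]
    exact le_sup_of_le_right (le_iSup_of_le s (le_iSup_of_le hsu le_rfl))
  have hZH : ∀ s u : ℤ, s ≤ u - 1 → StronglyMeasurable[H u] (Z s) := by
    intro s u hsu
    refine Measurable.stronglyMeasurable (Measurable.mono
      (Measurable.of_comap_le le_rfl : Measurable[MeasurableSpace.comap (Z s) inferInstance] (Z s)) ?_ le_rfl)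
    rw [hH]
    exact le_sup_of_le_left (le_iSup_of_le s (le_iSup_of_le hsu le_rfl))
  have hΘH : ∀ s u : ℤ, s ≤ u → StronglyMeasurable[H u] (Θ s) := by
    intro s u hsu
    refine Measurable.stronglyMeasurable (Measurable.mono
      (Measurable.of_comap_le le_rfl : Measurable[MeasurableSpace.comap (Θ s) inferInstance] (Θ s)) ?_ le_rfl)
    rw [hH]
    exact le_sup_of_le_right (le_iSup_of_le s (le_iSup_of_le hsu le_rfl))
  -- L2 membership of the conditional mean functions
  have hgrec : ∀ s : ℤ, MemLp (fun ω => Δ s * Θ s ω + c s) 2 P := fun s =>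
    ((hΘL2 s).const_mul (Δ s)).add (memLp_const (c s))
  have hgobs : ∀ s : ℤ, MemLp (fun ω => lam s * Θ s ω) 2 P := fun s =>
    (hΘL2 s).const_mul (lam s)
  -- means
  have hmeanZ : ∀ s : ℤ, ∫ ω, Z s ω ∂P = lam s * ∫ ω, Θ s ω ∂P := by
    intro s
    have h1 : ∫ ω, Z s ω ∂P = ∫ ω, (P[Z s | H s]) ω ∂P :=
      (integral_condExp (hHle s)).symm
    rw [h1, integral_congr_ae (hobs s), integral_const_mul]
  have hmeanΘ : ∀ s : ℤ, ∫ ω, Θ (s + 1) ω ∂P = Δ s * (∫ ω, Θ s ω ∂P) + c s := by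
    intro s
    have h1 : ∫ ω, Θ (s + 1) ω ∂P = ∫ ω, (P[Θ (s + 1) | G s]) ω ∂P :=
      (integral_condExp (hGle s)).symm
    rw [h1, integral_congr_ae (hrec s),
      integral_add (((hΘL2 s).integrable one_le_two).const_mul (Δ s)) (integrable_const (c s)),
      integral_const_mul, integral_const]
    simp [measure_univ]
  -- recursion step for ∫ X Θ_{s+1} when X is G_s-measurable
  have hstep : ∀ (X : Ω → ℝ) (s : ℤ), MemLp X 2 P → StronglyMeasurable[G s] X →
      ∫ ω, X ω * Θ (s + 1) ω ∂P = Δ s * (∫ ω, X ω * Θ s ω ∂P) + c s * ∫ ω, X ω ∂P := by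
    intro X s hX hXm
    have h1 : ∫ ω, X ω * Θ (s + 1) ω ∂P = ∫ ω, X ω * (Δ s * Θ s ω + c s) ∂P :=
      tower_mul (hGle s) hX (hΘL2 (s + 1)) (hgrec s) hXm (hrec s)
    rw [h1]
    have h2 : (fun ω => X ω * (Δ s * Θ s ω + c s))
        = fun ω => Δ s * (X ω * Θ s ω) + c s * X ω := by funext ω; ring
    rw [h2, integral_add ((l2_mul_integrable hX (hΘL2 s)).const_mul (Δ s))
      (((hX.integrable one_le_two)).const_mul (c s)), integral_const_mul, integral_const_mul]
  -- main induction: covariance of a G-adapted X with Θ_{t+j}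
  intro t k hk
  have key : ∀ (X : Ω → ℝ), MemLp X 2 P → StronglyMeasurable[G t] X → ∀ j : ℕ,
      (∫ ω, X ω * Θ (t + j) ω ∂P) - (∫ ω, X ω ∂P) * (∫ ω, Θ (t + j) ω ∂P)
        = (∏ i ∈ Finset.range j, Δ (t + i))
          * ((∫ ω, X ω * Θ t ω ∂P) - (∫ ω, X ω ∂P) * (∫ ω, Θ t ω ∂P)) := by
    intro X hX hXm
    intro j
    induction j with
    | zero => simp
    | succ j ih =>
      have hcast : t + ((j : ℕ) + 1 : ℕ) = (t + j) + 1 := by push_cast; ring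
      have hXmj : StronglyMeasurable[G (t + j)] X := by
        refine hXm.mono ?_
        rw [hG, hG]
        exact sup_le_sup
          (iSup₂_le fun s hs => le_iSup_of_le s (le_iSup_of_le
            (hs.trans (by omega)) le_rfl))
          (iSup₂_le fun s hs => le_iSup_of_le s (le_iSup_of_le
            (hs.trans (by omega)) le_rfl))
      rw [hcast, hstep X (t + j) hX hXmj, hmeanΘ (t + j), Finset.prod_range_succ]
      linear_combination (Δ (t + (j : ℤ))) * ih
  -- base cases
  have hbaseZ : (∫ ω, Z t ω * Θ t ω ∂P) - (∫ ω, Z t ω ∂P) * (∫ ω, Θ t ω ∂P)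
      = lam t * variance (Θ t) P := by
    have h1 : ∫ ω, Θ t ω * Z t ω ∂P = ∫ ω, Θ t ω * (lam t * Θ t ω) ∂P :=
      tower_mul (hHle t) (hΘL2 t) (hZL2 t) (hgobs t) (hΘH t t le_rfl) (hobs t)
    have h2 : ∫ ω, Z t ω * Θ t ω ∂P = lam t * ∫ ω, Θ t ω * Θ t ω ∂P := by
      rw [show (fun ω => Z t ω * Θ t ω) = fun ω => Θ t ω * Z t ω from by funext ω; ring, h1]
      rw [show (fun ω => Θ t ω * (lam t * Θ t ω)) = fun ω => lam t * (Θ t ω * Θ t ω) from by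
        funext ω; ring, integral_const_mul]
    have hv : variance (Θ t) P = (∫ ω, Θ t ω * Θ t ω ∂P) - (∫ ω, Θ t ω ∂P) ^ 2 := by
      rw [variance_eq_sub (hΘL2 t)]
      congr 1
      apply integral_congr_ae
      filter_upwards with ω
      simp [sq]
    rw [h2, hmeanZ t, hv]
    ring
  have hbaseΘ : (∫ ω, Θ t ω * Θ t ω ∂P) - (∫ ω, Θ t ω ∂P) * (∫ ω, Θ t ω ∂P)
      = variance (Θ t) P := by
    rw [variance_eq_sub (hΘL2 t)]
    have : P[(Θ t) ^ 2] = ∫ ω, Θ t ω * Θ t ω ∂P := by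
      apply integral_congr_ae
      filter_upwards with ω
      simp [sq]
    rw [this]
    ring
  -- from covariance with Θ_{t+k} to covariance of Z's
  have hk1 : t ≤ t + (k : ℤ) - 1 := by omega
  have hZZ : ∫ ω, Z t ω * Z (t + k) ω ∂P = lam (t + k) * ∫ ω, Z t ω * Θ (t + k) ω ∂P := by
    have h1 : ∫ ω, Z t ω * Z (t + k) ω ∂P = ∫ ω, Z t ω * (lam (t + k) * Θ (t + k) ω) ∂P :=
      tower_mul (hHle (t + k)) (hZL2 t) (hZL2 (t + k)) (hgobs (t + k))
        (hZH t (t + k) hk1) (hobs (t + k))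
    rw [h1, show (fun ω => Z t ω * (lam (t + k) * Θ (t + k) ω))
      = fun ω => lam (t + k) * (Z t ω * Θ (t + k) ω) from by funext ω; ring, integral_const_mul]
  have covZZ : ∫ ω, (Z t ω - ∫ ω', Z t ω' ∂P) * (Z (t + k) ω - ∫ ω', Z (t + k) ω' ∂P) ∂P
      = lam t * lam (t + k) * (∏ j ∈ Finset.range k, Δ (t + j)) * variance (Θ t) P := by
    rw [cov_expand (hZL2 t) (hZL2 (t + k)), hZZ, hmeanZ (t + k),
      show (∫ ω, Z t ω ∂P) * (lam (t + k) * ∫ ω, Θ (t + k) ω ∂P)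
        = lam (t + k) * ((∫ ω, Z t ω ∂P) * ∫ ω, Θ (t + k) ω ∂P) from by ring,
      ← mul_sub, key (Z t) (hZL2 t) (hZG t t le_rfl) k, hbaseZ]
    ring
  have covΘΘ : ∫ ω, (Θ t ω - ∫ ω', Θ t ω' ∂P) * (Θ (t + k) ω - ∫ ω', Θ (t + k) ω' ∂P) ∂P
      = (∏ j ∈ Finset.range k, Δ (t + j)) * variance (Θ t) P := by
    rw [cov_expand (hΘL2 t) (hΘL2 (t + k)), key (Θ t) (hΘL2 t) (hΘG t t le_rfl) k, hbaseΘ]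
  exact ⟨covZZ, by rw [covZZ, covΘΘ]; ring⟩
end

section
/- Let (β_t^{[0]})_{t∈ℤ} ⊆ [0, ∞), (β_t^{[1]})_{t∈ℤ} ⊆ (0, ∞) and (β_t^{[2]})_{t∈ℤ} ⊆ (0, ∞) be given sequences. Then there exist unique sequences (p_t)_{t∈ℤ} ⊆ (0, 1), (Δ_t)_{t∈ℤ} ⊆ (0, ∞) and (c_t)_{t∈ℤ} ⊆ [0, ∞) such that for all t ∈ ℤ: β_t^{[0]} = p_{t+1} c_t, β_t^{[1]} = p_{t+1} Δ_t, and β_t^{[2]} = p_{t+1} Δ_t (1/p_t − 1). Moreover, the unique solution is given by p_t = β_t^{[1]} / (β_t^{[1]} + β_t^{[2]}), Δ_t = β_t^{[1]} / p_{t+1}, and c_t = β_t^{[0]} / p_{t+1}. -/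
/-- **Parameter identification for the Poisson-INGARCH(1,1) model (Proposition 4.1).**
Given sequences `β⁰ ⊆ [0,∞)`, `β¹ ⊆ (0,∞)`, `β² ⊆ (0,∞)`, the sequences
`p ⊆ (0,1)`, `Δ ⊆ (0,∞)`, `c ⊆ [0,∞)` satisfy
`β⁰_t = p_{t+1} c_t`, `β¹_t = p_{t+1} Δ_t`, `β²_t = p_{t+1} Δ_t (1/p_t − 1)` for all `t`
if and only if they are given by the explicit formulas
`p_t = β¹_t/(β¹_t + β²_t)`, `Δ_t = β¹_t/p_{t+1}`, `c_t = β⁰_t/p_{t+1}`.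
In particular such sequences exist and are unique. -/
theorem stmt_6 (β0 β1 β2 : ℤ → ℝ)
    (h0 : ∀ t, 0 ≤ β0 t) (h1 : ∀ t, 0 < β1 t) (h2 : ∀ t, 0 < β2 t)
    (p Δ c : ℤ → ℝ) :
    ((∀ t, p t ∈ Set.Ioo (0 : ℝ) 1) ∧ (∀ t, 0 < Δ t) ∧ (∀ t, 0 ≤ c t) ∧
      (∀ t, β0 t = p (t + 1) * c t) ∧ (∀ t, β1 t = p (t + 1) * Δ t) ∧
      (∀ t, β2 t = p (t + 1) * Δ t * (1 / p t - 1)))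
    ↔ ((∀ t, p t = β1 t / (β1 t + β2 t)) ∧ (∀ t, Δ t = β1 t / p (t + 1)) ∧
      (∀ t, c t = β0 t / p (t + 1))) := by
  constructor
  · rintro ⟨hp, hΔ, hc, e0, e1, e2⟩
    have hpne : ∀ t, p t ≠ 0 := fun t => ne_of_gt (hp t).1
    refine ⟨fun t => ?_, fun t => ?_, fun t => ?_⟩
    · rw [eq_div_iff (ne_of_gt (add_pos (h1 t) (h2 t))), e1 t, e2 t]
      field_simp [hpne t]
      ring
    · rw [e1 t, mul_div_cancel_left₀ _ (hpne (t+1))]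
    · rw [e0 t, mul_div_cancel_left₀ _ (hpne (t+1))]
  · rintro ⟨fp, fΔ, fc⟩
    have hsum : ∀ t, 0 < β1 t + β2 t := fun t => add_pos (h1 t) (h2 t)
    have hp : ∀ t, p t ∈ Set.Ioo (0 : ℝ) 1 := by
      intro t
      rw [fp t]
      constructor
      · exact div_pos (h1 t) (hsum t)
      · rw [div_lt_one (hsum t)]; linarith [h2 t]
    have hpne : ∀ t, p t ≠ 0 := fun t => ne_of_gt (hp t).1
    refine ⟨hp, fun t => ?_, fun t => ?_, fun t => ?_, fun t => ?_, fun t => ?_⟩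
    · rw [fΔ t]; exact div_pos (h1 t) (hp (t+1)).1
    · rw [fc t]; exact div_nonneg (h0 t) (le_of_lt (hp (t+1)).1)
    · rw [fc t, mul_div_cancel₀ _ (hpne (t+1))]
    · rw [fΔ t, mul_div_cancel₀ _ (hpne (t+1))]
    · rw [fΔ t, mul_div_cancel₀ _ (hpne (t+1)), fp t]
      have h1ne := ne_of_gt (h1 t)
      have hsne := ne_of_gt (hsum t)
      field_simp
      ring
end

section
/- Let Δ > 0, c ≥ 0, λ > 0 and z ∈ ℕ. Let K be a random variable with Poisson(λ) distribution and let Y be a random variable with Poisson(Δ(z + λ) + c) distribution, and set X := Δ(z + K) + c. Then X ⪯_cx Y (i.e., E[φ(X)] ≤ E[φ(Y)] for every convex function φ : ℝ → ℝ such that φ(X) and φ(Y) are both integrable) if and only if Δ ≤ 1. -/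
open MeasureTheory ProbabilityTheory Real
open scoped NNReal ENNReal

noncomputable def pr (a : ℝ) (n : ℕ) : ℝ := Real.exp (-a) * a ^ n / n.factorial

lemma pr_nonneg {a : ℝ} (ha : 0 ≤ a) (n : ℕ) : 0 ≤ pr a n := by
  unfold pr; positivity

lemma pr_pos {a : ℝ} (ha : 0 < a) (n : ℕ) : 0 < pr a n := by
  unfold pr; positivity

lemma hasSum_exp_div (a : ℝ) : HasSum (fun n : ℕ => a ^ n / n.factorial) (Real.exp a) := by
  rw [Real.exp_eq_exp_ℝ]
  exact NormedSpace.expSeries_div_hasSum_exp a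

lemma hasSum_pr (a : ℝ) : HasSum (pr a) 1 := by
  have h := (hasSum_exp_div a).mul_left (Real.exp (-a))
  have : Real.exp (-a) * Real.exp a = 1 := by
    rw [← Real.exp_add]; simp
  rw [this] at h
  convert! h using 2 with n
  rw [pr, mul_div_assoc]

lemma hasSum_pr_mul_id (a : ℝ) : HasSum (fun n => pr a n * n) a := by
  have h0 : HasSum (fun n => a * pr a n) a := by
    simpa using (hasSum_pr a).mul_left a
  have key : ∀ n : ℕ, pr a (n + 1) * (n + 1 : ℕ) = a * pr a n := by
    intro n
    rw [pr, pr, Nat.factorial_succ, pow_succ]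
    push_cast
    field_simp
  have h1 : HasSum (fun n : ℕ => pr a (n + 1) * ((n + 1 : ℕ) : ℝ)) a := by
    convert h0 using 2 with n
    exact key n
  have hinj : Function.Injective (fun n : ℕ => n + 1) := fun x y h => by simpa using h
  exact (Function.Injective.hasSum_iff hinj (f := fun n : ℕ => pr a n * n)
    (by rintro (_ | m) hx
        · simp
        · exact absurd ⟨m, rfl⟩ hx)).mp h1

lemma hasSum_pr_exp (a t : ℝ) :
    HasSum (fun n => pr a n * Real.exp (t * n)) (Real.exp (a * Real.exp t - a)) := by
  have h := (hasSum_exp_div (a * Real.exp t)).mul_left (Real.exp (-a))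
  have : Real.exp (-a) * Real.exp (a * Real.exp t) = Real.exp (a * Real.exp t - a) := by
    rw [← Real.exp_add]; ring_nf
  rw [this] at h
  convert! h using 2 with n
  rw [pr, mul_pow, ← Real.exp_nat_mul]
  field_simp


lemma nat_measurable {f : ℕ → ℝ} : Measurable f := measurable_from_top

lemma pmf_integrable_iff (p : PMF ℕ) (f : ℕ → ℝ) :
    Integrable f p.toMeasure ↔ Summable (fun n => (p n).toReal * |f n|) := by
  have hmeas : AEStronglyMeasurable f p.toMeasure :=
    nat_measurable.aestronglyMeasurable
  rw [Integrable, and_iff_right hmeas, HasFiniteIntegral]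
  have hlint : ∫⁻ n, ‖f n‖₊ ∂p.toMeasure = ∑' n, ENNReal.ofReal ((p n).toReal * |f n|) := by
    rw [lintegral_countable' (fun n => (‖f n‖₊ : ℝ≥0∞))]
    congr 1 with n
    rw [PMF.toMeasure_apply_singleton p n (MeasurableSet.singleton n)]
    rw [ENNReal.ofReal_mul ENNReal.toReal_nonneg, ENNReal.ofReal_toReal (p.apply_ne_top n)]
    rw [mul_comm]
    congr 1
    rw [← Real.norm_eq_abs, ENNReal.ofReal, Real.toNNReal_eq_nnnorm_of_nonneg (norm_nonneg _)]
    simp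
  rw [show (∫⁻ (a : ℕ), ‖f a‖ₑ ∂p.toMeasure) = ∑' n, ENNReal.ofReal ((p n).toReal * |f n|) from hlint]
  constructor
  · intro h
    have hsum := ENNReal.summable_toReal h.ne
    refine hsum.congr fun n => ?_
    rw [ENNReal.toReal_ofReal (by positivity)]
  · intro h
    rw [← ENNReal.ofReal_tsum_of_nonneg (fun n => by positivity) h]
    exact ENNReal.ofReal_lt_top

lemma pmf_integral_eq (p : PMF ℕ) (f : ℕ → ℝ) (hf : Integrable f p.toMeasure) :
    ∫ n, f n ∂p.toMeasure = ∑' n, (p n).toReal * f n := by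
  rw [PMF.integral_eq_tsum p f hf]
  simp [smul_eq_mul]

/-- Countable Jensen inequality on ℕ. -/
lemma jensen_tsum {φ : ℝ → ℝ} (hφ : ConvexOn ℝ Set.univ φ) {w : ℕ → ℝ}
    (hw : ∀ n, 0 ≤ w n) (h1 : HasSum w 1) {m : ℝ}
    (hm : HasSum (fun n => w n * n) m)
    (hs : Summable (fun n => w n * |φ n|)) :
    φ m ≤ ∑' n, w n * φ n := by
  set p : PMF ℕ := ⟨fun n => ENNReal.ofReal (w n), by
    apply ENNReal.hasSum_coe.mpr
    rw [← Real.toNNReal_one]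
    exact h1.toNNReal hw⟩ with hp
  have happ : ∀ n, (p n).toReal = w n := fun n => by
    rw [hp]; exact ENNReal.toReal_ofReal (hw n)
  have hint1 : Integrable (fun n : ℕ => (n : ℝ)) p.toMeasure := by
    rw [pmf_integrable_iff]
    refine hm.summable.congr fun n => ?_
    rw [happ, Nat.abs_cast]
  have hint2 : Integrable (fun n : ℕ => φ n) p.toMeasure := by
    rw [pmf_integrable_iff]
    refine hs.congr fun n => by rw [happ]
  have hmean : ∫ n, (n : ℝ) ∂p.toMeasure = m := by
    rw [pmf_integral_eq _ _ hint1]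
    refine Eq.trans ?_ hm.tsum_eq
    congr 1 with n; rw [happ]
  have hjen := hφ.map_integral_le (hφ.continuousOn isOpen_univ) isClosed_univ
    (Filter.Eventually.of_forall fun n => Set.mem_univ _) hint1 hint2
  rw [hmean] at hjen
  refine hjen.trans_eq ?_
  rw [pmf_integral_eq _ _ hint2]
  congr 1 with n; rw [happ]

noncomputable def Bq (q : ℝ) (k j : ℕ) : ℝ := (k.choose j : ℝ) * q ^ j * (1 - q) ^ (k - j)

lemma Bq_nonneg {q : ℝ} (hq0 : 0 ≤ q) (hq1 : q ≤ 1) (k j : ℕ) : 0 ≤ Bq q k j := by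
  unfold Bq
  have : (0:ℝ) ≤ 1 - q := by linarith
  positivity

lemma Bq_eq_zero {q : ℝ} {k j : ℕ} (h : k < j) : Bq q k j = 0 := by
  unfold Bq
  rw [Nat.choose_eq_zero_of_lt h]
  simp

lemma sum_Bq (q : ℝ) (k : ℕ) : ∑ j ∈ Finset.range (k + 1), Bq q k j = 1 := by
  have h := add_pow q (1 - q) k
  simp only [add_sub_cancel, one_pow] at h
  rw [h]
  apply Finset.sum_congr rfl
  intro j hj
  unfold Bq
  ring

lemma hasSum_Bq (q : ℝ) (k : ℕ) : HasSum (Bq q k) 1 := by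
  rw [← sum_Bq q k]
  exact hasSum_sum_of_ne_finset_zero (by
    intro j hj
    exact Bq_eq_zero (by simpa [Nat.lt_succ_iff, Finset.mem_range] using hj))

lemma sum_Bq_mul_id (q : ℝ) (k : ℕ) :
    ∑ j ∈ Finset.range (k + 1), Bq q k j * j = q * k := by
  cases k with
  | zero => simp [Bq]
  | succ m =>
    rw [Finset.sum_range_succ']
    simp only [Nat.cast_zero, mul_zero, add_zero]
    have key : ∀ i, Bq q (m + 1) (i + 1) * ((i + 1 : ℕ) : ℝ)
        = (q * (m + 1)) * Bq q m i := by
      intro i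
      unfold Bq
      have hch : ((m + 1).choose (i + 1) * (i + 1) : ℕ) = ((m + 1) * m.choose i : ℕ) :=
        (Nat.add_one_mul_choose_eq m i).symm
      have hcast : ((m + 1).choose (i + 1) : ℝ) * ((i + 1 : ℕ) : ℝ)
          = ((m + 1 : ℕ) : ℝ) * (m.choose i : ℝ) := by
        rw [← Nat.cast_mul, ← Nat.cast_mul, hch]
      have hsub : m + 1 - (i + 1) = m - i := by omega
      rw [hsub, pow_succ]
      push_cast at hcast ⊢
      linear_combination (q ^ i * q * (1 - q) ^ (m - i)) * hcast
    calc ∑ i ∈ Finset.range (m + 1), Bq q (m + 1) (i + 1) * ((i + 1 : ℕ) : ℝ)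
        = ∑ i ∈ Finset.range (m + 1), (q * (m + 1)) * Bq q m i := by
          exact Finset.sum_congr rfl fun i _ => key i
      _ = (q * (m + 1)) * ∑ i ∈ Finset.range (m + 1), Bq q m i := by
          rw [Finset.mul_sum]
      _ = q * (m + 1) := by rw [sum_Bq]; ring
      _ = q * ((m + 1 : ℕ) : ℝ) := by push_cast; ring

lemma hasSum_Bq_mul_id (q : ℝ) (k : ℕ) :
    HasSum (fun j => Bq q k j * j) (q * k) := by
  rw [← sum_Bq_mul_id q k]
  exact hasSum_sum_of_ne_finset_zero (by
    intro j hj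
    rw [Bq_eq_zero (by simpa [Nat.lt_succ_iff, Finset.mem_range] using hj), zero_mul])

/-- Poisson thinning: `∑_k pr μ k * Bq q k j = pr (q μ) j`. -/
lemma hasSum_pr_Bq (μ q : ℝ) (j : ℕ) :
    HasSum (fun k => pr μ k * Bq q k j) (pr (q * μ) j) := by
  have key : ∀ m : ℕ, pr μ (j + m) * Bq q (j + m) j
      = (Real.exp (-μ) * (q * μ) ^ j / j.factorial) * ((μ * (1 - q)) ^ m / m.factorial) := by
    intro m
    have hch : ((j + m).choose j : ℝ) * (j.factorial : ℝ) * (m.factorial : ℝ)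
        = ((j + m).factorial : ℝ) := by
      rw [← Nat.cast_mul, ← Nat.cast_mul]
      congr 1
      have := Nat.choose_mul_factorial_mul_factorial (Nat.le_add_right j m)
      simpa [Nat.add_sub_cancel_left] using this
    have hfj : (0:ℝ) < (j.factorial : ℝ) := by positivity
    have hfm : (0:ℝ) < (m.factorial : ℝ) := by positivity
    have hC : ((j + m).choose j : ℝ)
        = ((j + m).factorial : ℝ) / ((j.factorial : ℝ) * (m.factorial : ℝ)) := by
      rw [eq_div_iff (by positivity), ← mul_assoc]
      exact hch
    have hsub : j + m - j = m := by omega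
    unfold pr Bq
    rw [hsub, hC, pow_add, mul_pow, mul_pow]
    have hf : (0:ℝ) < ((j + m).factorial : ℝ) := by positivity
    field_simp
  have he : Real.exp (-μ) * Real.exp (μ * (1 - q)) = Real.exp (-(q * μ)) := by
    rw [← Real.exp_add]
    ring_nf
  have hexp : HasSum (fun m : ℕ => (Real.exp (-μ) * (q * μ) ^ j / j.factorial)
      * ((μ * (1 - q)) ^ m / m.factorial))
      (pr (q * μ) j) := by
    have h := (hasSum_exp_div (μ * (1 - q))).mul_left
      (Real.exp (-μ) * (q * μ) ^ j / j.factorial)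
    convert! h using 1
    unfold pr
    rw [← he]
    ring
  have h1 : HasSum (fun m : ℕ => pr μ (j + m) * Bq q (j + m) j) (pr (q * μ) j) :=
    hexp.congr_fun key
  have hinj : Function.Injective (fun m : ℕ => j + m) := fun x y h => by simpa using h
  exact (Function.Injective.hasSum_iff hinj
    (f := fun k => pr μ k * Bq q k j)
    (by
      intro k hk
      have hkj : k < j := by
        by_contra hge
        exact hk ⟨k - j, by show j + (k - j) = k; omega⟩
      simp only [Bq_eq_zero hkj, mul_zero])).mp h1

noncomputable def Wgt (q a : ℝ) (k n : ℕ) : ℝ :=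
  ∑ j ∈ Finset.range (n + 1), Bq q k j * pr a (n - j)

lemma Wgt_nonneg {q a : ℝ} (hq0 : 0 ≤ q) (hq1 : q ≤ 1) (ha : 0 ≤ a) (k n : ℕ) :
    0 ≤ Wgt q a k n :=
  Finset.sum_nonneg fun j _ => mul_nonneg (Bq_nonneg hq0 hq1 k j) (pr_nonneg ha _)

section Wfacts

variable {q a : ℝ} (hq0 : 0 ≤ q) (hq1 : q ≤ 1) (ha : 0 ≤ a)

include hq0 hq1 ha

lemma summable_norm_Bq (k : ℕ) : Summable fun j => ‖Bq q k j‖ := by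
  apply summable_of_ne_finset_zero (s := Finset.range (k + 1))
  intro j hj
  rw [Bq_eq_zero (by simpa [Nat.lt_succ_iff, Finset.mem_range] using hj), norm_zero]

lemma summable_norm_pr : Summable fun n => ‖pr a n‖ :=
  (hasSum_pr a).summable.congr fun n => (Real.norm_eq_abs _ ▸ abs_of_nonneg (pr_nonneg ha n)).symm

lemma hasSum_Wgt (k : ℕ) : HasSum (Wgt q a k) 1 := by
  have h := hasSum_sum_range_mul_of_summable_norm (f := Bq q k) (g := pr a)
    (summable_norm_Bq hq0 hq1 ha k) (summable_norm_pr hq0 hq1 ha)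
  rw [(hasSum_Bq q k).tsum_eq, (hasSum_pr a).tsum_eq, one_mul] at h
  exact h

lemma hasSum_Wgt_mul_id (k : ℕ) :
    HasSum (fun n => Wgt q a k n * n) (q * k + a) := by
  have h1 := hasSum_sum_range_mul_of_summable_norm
    (f := fun j => Bq q k j * j) (g := pr a)
    (by
      apply summable_of_ne_finset_zero (s := Finset.range (k + 1))
      intro j hj
      simp only [Bq_eq_zero (show k < j by simpa [Nat.lt_succ_iff, Finset.mem_range] using hj),
        zero_mul, norm_zero])
    (summable_norm_pr hq0 hq1 ha)
  rw [(hasSum_Bq_mul_id q k).tsum_eq, (hasSum_pr a).tsum_eq, mul_one] at h1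
  have h2 := hasSum_sum_range_mul_of_summable_norm
    (f := Bq q k) (g := fun m => pr a m * m)
    (summable_norm_Bq hq0 hq1 ha k)
    ((hasSum_pr_mul_id a).summable.congr fun n => (Real.norm_eq_abs _ ▸
      abs_of_nonneg (mul_nonneg (pr_nonneg ha n) (Nat.cast_nonneg n))).symm)
  rw [(hasSum_Bq q k).tsum_eq, (hasSum_pr_mul_id a).tsum_eq, one_mul] at h2
  have hpt : ∀ n, Wgt q a k n * n
      = (∑ j ∈ Finset.range (n + 1), (Bq q k j * j) * pr a (n - j))
        + ∑ j ∈ Finset.range (n + 1), Bq q k j * (pr a (n - j) * ((n - j : ℕ) : ℝ)) := by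
    intro n
    rw [Wgt, Finset.sum_mul, ← Finset.sum_add_distrib]
    apply Finset.sum_congr rfl
    intro j hj
    have hjn : j ≤ n := by simpa [Nat.lt_succ_iff] using hj
    have : ((n : ℝ)) = (j : ℝ) + ((n - j : ℕ) : ℝ) := by
      rw [← Nat.cast_add]
      congr 1
      omega
    rw [this]
    ring
  exact (h1.add h2).congr_fun hpt

omit hq0 hq1 ha in
/-- Poisson convolution identity. -/
lemma pr_conv (x y : ℝ) (n : ℕ) :
    ∑ j ∈ Finset.range (n + 1), pr x j * pr y (n - j) = pr (x + y) n := by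
  unfold pr
  rw [add_pow x y n]
  rw [Finset.mul_sum, Finset.sum_div]
  apply Finset.sum_congr rfl
  intro j hj
  have hjn : j ≤ n := by simpa [Nat.lt_succ_iff] using hj
  have hch : (n.choose j : ℝ) * (j.factorial : ℝ) * ((n - j).factorial : ℝ)
      = (n.factorial : ℝ) := by
    rw [← Nat.cast_mul, ← Nat.cast_mul]
    exact_mod_cast congrArg (Nat.cast : ℕ → ℝ) (Nat.choose_mul_factorial_mul_factorial hjn)
  have h1 : (0:ℝ) < (j.factorial : ℝ) := by positivity
  have h2 : (0:ℝ) < ((n - j).factorial : ℝ) := by positivity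
  have h3 : (0:ℝ) < (n.factorial : ℝ) := by positivity
  have hexp : Real.exp (-(x + y)) = Real.exp (-x) * Real.exp (-y) := by
    rw [← Real.exp_add]; ring_nf
  have h4 : (0:ℝ) < (n.choose j : ℝ) := by exact_mod_cast Nat.choose_pos hjn
  rw [hexp, ← hch]
  field_simp

/-- `∑_k pr μ k * Wgt q a k n = pr (q μ + a) n`. -/
lemma hasSum_pr_Wgt (μ : ℝ) (n : ℕ) :
    HasSum (fun k => pr μ k * Wgt q a k n) (pr (q * μ + a) n) := by
  have hterm : ∀ j ∈ Finset.range (n + 1),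
      HasSum (fun k => (pr μ k * Bq q k j) * pr a (n - j)) (pr (q * μ) j * pr a (n - j)) :=
    fun j _ => (hasSum_pr_Bq μ q j).mul_right _
  have h := hasSum_sum (f := fun j k => (pr μ k * Bq q k j) * pr a (n - j))
    (a := fun j => pr (q * μ) j * pr a (n - j)) (s := Finset.range (n + 1)) hterm
  rw [pr_conv (q * μ) a n] at h
  refine h.congr_fun fun k => ?_
  rw [Wgt, Finset.mul_sum]
  apply Finset.sum_congr rfl
  intro j _
  ring

end Wfacts

lemma key_le {q a μ : ℝ} (hq0 : 0 < q) (hq1 : q ≤ 1) (hμ : 0 < μ) (ha : 0 ≤ a)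
    {φ : ℝ → ℝ} (hφ : ConvexOn ℝ Set.univ φ)
    (S1 : Summable fun k => pr μ k * |φ (q * k + a)|)
    (S2 : Summable fun n => pr (q * μ + a) n * |φ n|) :
    ∑' k, pr μ k * φ (q * k + a) ≤ ∑' n, pr (q * μ + a) n * φ n := by
  have hq0' : (0:ℝ) ≤ q := hq0.le
  have hμ' : (0:ℝ) ≤ μ := hμ.le
  have hW0 : ∀ k n, 0 ≤ Wgt q a k n := fun k n => Wgt_nonneg hq0' hq1 ha k n
  set F : ℕ × ℕ → ℝ := fun p => pr μ p.1 * Wgt q a p.1 p.2 * |φ p.2| with hF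
  have hF0 : ∀ p, 0 ≤ F p := fun p =>
    mul_nonneg (mul_nonneg (pr_nonneg hμ' _) (hW0 _ _)) (abs_nonneg _)
  have hG : Summable fun p : ℕ × ℕ => F (p.2, p.1) := by
    apply (summable_prod_of_nonneg (f := fun p : ℕ × ℕ => F (p.2, p.1))
      (fun p => hF0 (p.2, p.1))).mpr
    refine ⟨fun n => ?_, ?_⟩
    · exact ((hasSum_pr_Wgt hq0' hq1 ha μ n).summable.mul_right |φ (n:ℕ)|).congr fun k => rfl
    · apply S2.congr
      intro n
      symm
      rw [← ((hasSum_pr_Wgt hq0' hq1 ha μ n).mul_right |φ (n:ℕ)|).tsum_eq]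
  have hFsum : Summable F := (Equiv.prodComm ℕ ℕ).summable_iff.mp (by exact hG)
  -- summability of rows
  have hrow : ∀ k, Summable fun n => Wgt q a k n * |φ n| := by
    intro k
    have hpk : 0 < pr μ k := pr_pos hμ k
    have h := (hFsum.prod_factor k).mul_left (pr μ k)⁻¹
    apply h.congr
    intro n
    simp only [hF]
    rw [← mul_assoc, ← mul_assoc, inv_mul_cancel₀ hpk.ne', one_mul]
  -- Jensen pointwise
  have hjen : ∀ k : ℕ, φ (q * k + a) ≤ ∑' n, Wgt q a k n * φ n := fun k =>
    jensen_tsum hφ (hW0 k) (hasSum_Wgt hq0' hq1 ha k)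
      (hasSum_Wgt_mul_id hq0' hq1 ha k) (hrow k)
  set T : ℕ → ℝ := fun k => ∑' n, Wgt q a k n * φ n with hT
  set A : ℕ → ℝ := fun k => ∑' n, Wgt q a k n * |φ n| with hA
  have hTA : ∀ k, |pr μ k * T k| ≤ pr μ k * A k := by
    intro k
    rw [abs_mul, abs_of_nonneg (pr_nonneg hμ' k)]
    apply mul_le_mul_of_nonneg_left _ (pr_nonneg hμ' k)
    have hnormsum : Summable fun n => ‖Wgt q a k n * φ (n:ℕ)‖ := (hrow k).congr fun n => by
      rw [Real.norm_eq_abs, abs_mul, abs_of_nonneg (hW0 k n)]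
    calc |T k| = ‖∑' n, Wgt q a k n * φ (n:ℕ)‖ := (Real.norm_eq_abs _).symm
      _ ≤ ∑' n, ‖Wgt q a k n * φ (n:ℕ)‖ := norm_tsum_le_tsum_norm hnormsum
      _ = A k := tsum_congr fun n => by
          rw [Real.norm_eq_abs, abs_mul, abs_of_nonneg (hW0 k n)]
  have hpA : Summable fun k => pr μ k * A k := by
    have h := ((summable_prod_of_nonneg (fun p => hF0 p)).mp hFsum).2
    apply h.congr
    intro k
    rw [hA, ← tsum_mul_left]
    congr 1 with n
    simp only [hF]
    ring
  have hpT : Summable fun k => pr μ k * T k :=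
    Summable.of_abs (hpA.of_nonneg_of_le (fun k => abs_nonneg _) hTA)
  -- first inequality
  have hineq1 : ∑' k, pr μ k * φ (q * k + a) ≤ ∑' k, pr μ k * T k := by
    apply Summable.tsum_le_tsum _ (Summable.of_abs (S1.congr fun k => by
      rw [abs_mul, abs_of_nonneg (pr_nonneg hμ' k)])) hpT
    intro k
    exact mul_le_mul_of_nonneg_left (hjen k) (pr_nonneg hμ' k)
  -- Fubini equality
  have hHsum : Summable (fun p : ℕ × ℕ => pr μ p.1 * (Wgt q a p.1 p.2 * φ p.2)) := by
    apply Summable.of_abs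
    apply hFsum.congr
    intro p
    rw [abs_mul, abs_mul, abs_of_nonneg (pr_nonneg hμ' _), abs_of_nonneg (hW0 _ _)]
    simp only [hF]
    ring
  have hswap := Summable.tsum_comm (f := fun k n => pr μ k * (Wgt q a k n * φ n)) (by exact hHsum)
  have heq : ∑' k, pr μ k * T k = ∑' n, pr (q * μ + a) n * φ n := by
    calc ∑' k, pr μ k * T k = ∑' (k) (n), pr μ k * (Wgt q a k n * φ n) := by
           apply tsum_congr
           intro k
           rw [hT, ← tsum_mul_left]
      _ = ∑' (n) (k), pr μ k * (Wgt q a k n * φ n) := hswap.symm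
      _ = ∑' n, pr (q * μ + a) n * φ n := by
           apply tsum_congr
           intro n
           rw [← ((hasSum_pr_Wgt hq0' hq1 ha μ n).mul_right (φ n)).tsum_eq]
           apply tsum_congr
           intro k
           ring
  rw [heq] at hineq1
  exact hineq1

lemma convexOn_exp_mul (θ : ℝ) : ConvexOn ℝ Set.univ fun x : ℝ => Real.exp (θ * x) := by
  have h := convexOn_exp.comp_affineMap (θ • AffineMap.id ℝ ℝ)
  simpa [Function.comp_def] using h

lemma key_refute {q cz μ : ℝ} (hq : 1 < q) (hμ : 0 < μ) (hcz : 0 ≤ cz) :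
    ∃ θ : ℝ, 0 < θ ∧ ∑' n, pr (q * μ + cz) n * Real.exp (θ * n)
      < ∑' k, pr μ k * Real.exp (θ * (q * k + cz)) := by
  set Λ := q * μ + cz with hΛ
  have hμΛ : μ < Λ := by
    have : μ < q * μ := by nlinarith
    simp only [hΛ]; linarith
  have hΛpos : 0 < Λ := hμ.trans hμΛ
  have hratio : 1 < Λ / μ := (one_lt_div hμ).mpr hμΛ
  set θ := Real.log (Λ / μ) / (q - 1) with hθ
  have hθpos : 0 < θ := div_pos (Real.log_pos hratio) (by linarith)
  refine ⟨θ, hθpos, ?_⟩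
  have hexpθ : Real.exp (θ * (q - 1)) = Λ / μ := by
    rw [hθ, div_mul_cancel₀ _ (by linarith : q - 1 ≠ 0)]
    exact Real.exp_log (by positivity)
  have hkey : μ * Real.exp (θ * q) = Λ * Real.exp θ := by
    have : θ * q = θ * (q - 1) + θ := by ring
    rw [this, Real.exp_add, hexpθ]
    field_simp
  -- LHS value
  have hL : ∑' n, pr Λ n * Real.exp (θ * n) = Real.exp (Λ * Real.exp θ - Λ) :=
    (hasSum_pr_exp Λ θ).tsum_eq
  -- RHS value
  have hR : ∑' k, pr μ k * Real.exp (θ * (q * k + cz))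
      = Real.exp (θ * cz + (μ * Real.exp (θ * q) - μ)) := by
    have h := (hasSum_pr_exp μ (θ * q)).mul_left (Real.exp (θ * cz))
    rw [← Real.exp_add] at h
    refine Eq.trans ?_ h.tsum_eq
    apply tsum_congr
    intro k
    rw [show θ * (q * k + cz) = θ * cz + θ * q * k by ring, Real.exp_add]
    ring_nf
  rw [hL, hR]
  apply Real.exp_lt_exp.mpr
  rw [hkey]
  nlinarith [mul_pos hθpos (lt_of_lt_of_le hμ (le_of_lt hμΛ))]

lemma poissonPMF_toReal (r : ℝ≥0) (n : ℕ) : ((poissonPMF r) n).toReal = pr r n := by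
  rw [poissonPMF]
  exact ENNReal.toReal_ofReal poissonPMFReal_nonneg

lemma integrable_comp_poisson_iff {Ω : Type*} [MeasurableSpace Ω] (P : Measure Ω)
    (K : Ω → ℕ) (hKmeas : Measurable K) (r : ℝ≥0) (hK : Measure.map K P = poissonMeasure r)
    (f : ℕ → ℝ) :
    Integrable (fun ω => f (K ω)) P ↔ Summable (fun n => pr r n * |f n|) := by
  rw [show (fun ω => f (K ω)) = f ∘ K from rfl,
    ← integrable_map_measure nat_measurable.aestronglyMeasurable hKmeas.aemeasurable, hK,
    integrable_poissonMeasure_iff]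
  exact summable_congr fun n => by rw [Real.norm_eq_abs]; rfl

lemma integral_comp_poisson {Ω : Type*} [MeasurableSpace Ω] (P : Measure Ω)
    (K : Ω → ℕ) (hKmeas : Measurable K) (r : ℝ≥0) (hK : Measure.map K P = poissonMeasure r)
    (f : ℕ → ℝ) (hf : Integrable (fun ω => f (K ω)) P) :
    ∫ ω, f (K ω) ∂P = ∑' n, pr r n * f n := by
  rw [← integral_map hKmeas.aemeasurable nat_measurable.aestronglyMeasurable, hK,
    integral_poissonMeasure']
  · exact tsum_congr fun n => by rw [smul_eq_mul]; rfl
  · rw [← hK,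
      integrable_map_measure nat_measurable.aestronglyMeasurable hKmeas.aemeasurable]
    exact hf


lemma summable_pr_exp (a t c' : ℝ) : Summable fun k : ℕ => pr a k * Real.exp (t * k + c') := by
  have h := (hasSum_pr_exp a t).summable.mul_left (Real.exp c')
  apply h.congr
  intro k
  rw [Real.exp_add]
  ring

/-- **Convex-order characterization for the Poisson-INGARCH(1,1) evolution
(pathwise content of Theorem 4.1 of the paper).**
Let `Δ > 0`, `c ≥ 0`, `λ > 0`, `z ∈ ℕ`, `K ∼ Poisson(λ)`, `Y ∼ Poisson(Δ(z+λ)+c)` and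
`X = Δ(z+K)+c`. Then `X ⪯_cx Y` if and only if `Δ ≤ 1`. -/
theorem stmt_7 {Ω : Type*} [mΩ : MeasurableSpace Ω] (P : Measure Ω) [IsProbabilityMeasure P]
    (Δ c : ℝ) (hΔ : 0 < Δ) (hc : 0 ≤ c) (lam : ℝ≥0) (hlam : 0 < lam) (z : ℕ)
    (K Y : Ω → ℕ) (hKmeas : Measurable K) (hYmeas : Measurable Y)
    (hK : Measure.map K P = poissonMeasure lam)
    (hY : Measure.map Y P = poissonMeasure (Δ * ((z : ℝ) + (lam : ℝ)) + c).toNNReal) :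
    (∀ φ : ℝ → ℝ, ConvexOn ℝ Set.univ φ →
        Integrable (fun ω => φ (Δ * ((z : ℝ) + (K ω : ℝ)) + c)) P →
        Integrable (fun ω => φ ((Y ω : ℝ))) P →
        ∫ ω, φ (Δ * ((z : ℝ) + (K ω : ℝ)) + c) ∂P ≤ ∫ ω, φ ((Y ω : ℝ)) ∂P)
    ↔ Δ ≤ 1 := by
  have hμ : (0:ℝ) < (lam : ℝ) := hlam
  have hcz : (0:ℝ) ≤ Δ * (z:ℝ) + c := by positivity
  have hΛpos : (0:ℝ) < Δ * ((z : ℝ) + (lam : ℝ)) + c := by positivity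
  set r2 : ℝ≥0 := (Δ * ((z : ℝ) + (lam : ℝ)) + c).toNNReal with hr2def
  have hr2 : (r2 : ℝ) = Δ * ((z : ℝ) + (lam : ℝ)) + c := Real.coe_toNNReal _ hΛpos.le
  have hΛeq : (r2 : ℝ) = Δ * (lam : ℝ) + (Δ * (z:ℝ) + c) := by rw [hr2]; ring
  constructor
  · -- convex order implies Δ ≤ 1
    intro h
    by_contra hq
    push_neg at hq
    obtain ⟨θ, hθpos, hlt⟩ := key_refute (q := Δ) (cz := Δ * (z:ℝ) + c) (μ := (lam:ℝ)) hq hμ hcz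
    set φ : ℝ → ℝ := fun x => Real.exp (θ * x) with hφdef
    have hconv : ConvexOn ℝ Set.univ φ := convexOn_exp_mul θ
    have habs1 : ∀ k : ℕ, pr lam k * Real.exp ((θ * Δ) * k + θ * (Δ * (z:ℝ) + c))
        = pr lam k * |φ (Δ * ((z : ℝ) + (k : ℝ)) + c)| := by
      intro k
      rw [hφdef, abs_of_pos (Real.exp_pos _)]
      congr 1
      · congr 1
        ring
    have hint1 : Integrable (fun ω => φ (Δ * ((z : ℝ) + (K ω : ℝ)) + c)) P := by
      rw [integrable_comp_poisson_iff P K hKmeas lam hK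
        (fun k => φ (Δ * ((z : ℝ) + (k : ℝ)) + c))]
      exact (summable_pr_exp lam (θ * Δ) (θ * (Δ * (z:ℝ) + c))).congr habs1
    have habs2 : ∀ n : ℕ, pr r2 n * Real.exp (θ * n + 0) = pr r2 n * |φ (n : ℝ)| := by
      intro n
      rw [hφdef, abs_of_pos (Real.exp_pos _), add_zero]
    have hint2 : Integrable (fun ω => φ ((Y ω : ℝ))) P := by
      rw [integrable_comp_poisson_iff P Y hYmeas r2 hY (fun n => φ (n : ℝ))]
      exact (summable_pr_exp r2 θ 0).congr habs2
    have hle := h φ hconv hint1 hint2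
    rw [integral_comp_poisson P K hKmeas lam hK
        (fun k => φ (Δ * ((z : ℝ) + (k : ℝ)) + c)) hint1,
      integral_comp_poisson P Y hYmeas r2 hY (fun n => φ ((n : ℝ))) hint2] at hle
    have hleft : ∑' k, pr lam k * φ (Δ * ((z : ℝ) + (k : ℝ)) + c)
        = ∑' k, pr (lam:ℝ) k * Real.exp (θ * (Δ * (k:ℝ) + (Δ * (z:ℝ) + c))) := by
      apply tsum_congr
      intro k
      rw [hφdef]
      congr 2
      ring
    have hright : ∑' n, pr r2 n * φ ((n : ℝ))
        = ∑' n, pr (Δ * (lam:ℝ) + (Δ * (z:ℝ) + c)) n * Real.exp (θ * (n:ℝ)) := by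
      apply tsum_congr
      intro n
      rw [hφdef, hΛeq]
    rw [hleft, hright] at hle
    exact absurd hle (not_le.mpr hlt)
  · -- Δ ≤ 1 implies convex order
    intro hΔ1 φ hφ hint1 hint2
    have S1 : Summable fun k : ℕ => pr (lam:ℝ) k * |φ (Δ * (k:ℝ) + (Δ * (z:ℝ) + c))| := by
      have hs := (integrable_comp_poisson_iff P K hKmeas lam hK
        (fun k => φ (Δ * ((z : ℝ) + (k : ℝ)) + c))).mp hint1
      apply hs.congr
      intro k
      congr 3
      ring
    have S2 : Summable fun n : ℕ =>
        pr (Δ * (lam:ℝ) + (Δ * (z:ℝ) + c)) n * |φ ((n : ℝ))| := by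
      have hs := (integrable_comp_poisson_iff P Y hYmeas r2 hY (fun n => φ (n : ℝ))).mp hint2
      apply hs.congr
      intro n
      rw [hΛeq]
    have hkey := key_le hΔ hΔ1 hμ hcz hφ S1 S2
    rw [integral_comp_poisson P K hKmeas lam hK
        (fun k => φ (Δ * ((z : ℝ) + (k : ℝ)) + c)) hint1,
      integral_comp_poisson P Y hYmeas r2 hY (fun n => φ ((n : ℝ))) hint2]
    have hleft : ∑' k, pr lam k * φ (Δ * ((z : ℝ) + (k : ℝ)) + c)
        = ∑' k, pr (lam:ℝ) k * φ (Δ * (k:ℝ) + (Δ * (z:ℝ) + c)) := by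
      apply tsum_congr
      intro k
      congr 2
      ring
    have hright : ∑' n, pr r2 n * φ ((n : ℝ))
        = ∑' n, pr (Δ * (lam:ℝ) + (Δ * (z:ℝ) + c)) n * φ ((n : ℝ)) := by
      apply tsum_congr
      intro n
      rw [hΛeq]
    rw [hleft, hright]
    exact hkey
end

section
/- Let Δ ∈ (0, 1], c ≥ 0, λ > 0 and z ∈ ℕ. On some probability space, let K be a Poisson(λ)-distributed random variable, let K′ be a random variable whose conditional distribution given K = k is Binomial(k, Δ) for every k ∈ ℕ, and let Z′ be a Poisson(Δz + c)-distributed random variable independent of (K, K′). Then: (1) K′ has Poisson(Δλ) distribution; (2) Z′ + K′ has Poisson(Δ(z + λ) + c) distribution; and (3) E[Z′ + K′ | σ(K)] = Δ(z + K) + c almost surely. -/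
open MeasureTheory ProbabilityTheory Real
open scoped NNReal ENNReal

lemma pois_singleton (r : ℝ≥0) (n : ℕ) :
    poissonMeasure r {n} = ENNReal.ofReal (poissonPMFReal r n) := by
  rw [poissonMeasure_singleton]
  rfl

lemma map_pois_singleton {Ω : Type*} [MeasurableSpace Ω] {P : Measure Ω} {X : Ω → ℕ}
    (hX : Measurable X) {r : ℝ≥0} (h : Measure.map X P = poissonMeasure r) (n : ℕ) :
    P {ω | X ω = n} = ENNReal.ofReal (poissonPMFReal r n) := by
  have : {ω | X ω = n} = X ⁻¹' {n} := rfl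
  rw [this, ← Measure.map_apply hX (measurableSet_singleton n), h, pois_singleton]

lemma pois_mean_hasSum (r : ℝ≥0) :
    HasSum (fun n : ℕ => (n : ℝ) * poissonPMFReal r n) r := by
  have h := (poissonPMFRealSum r).mul_left (r : ℝ)
  have h2 : (fun n : ℕ => ((n + 1 : ℕ) : ℝ) * poissonPMFReal r (n + 1))
      = fun n => (r : ℝ) * poissonPMFReal r n := by
    ext n
    unfold poissonPMFReal
    rw [Nat.factorial_succ]
    push_cast
    have hn : ((n : ℝ) + 1) ≠ 0 := by positivity
    have hf : (Nat.factorial n : ℝ) ≠ 0 := Nat.cast_ne_zero.mpr (Nat.factorial_ne_zero n)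
    field_simp
    ring
  rw [mul_one] at h
  have h3 : HasSum (fun n : ℕ => (((n + 1 : ℕ) : ℝ)) * poissonPMFReal r (n + 1)) (r : ℝ) := by
    rw [h2]; exact h
  have := (hasSum_nat_add_iff (f := fun n : ℕ => (n : ℝ) * poissonPMFReal r n) 1).mp h3
  simpa using this

lemma pois_lintegral (r : ℝ≥0) :
    ∫⁻ n, (n : ℝ≥0∞) ∂(poissonMeasure r) = (r : ℝ≥0∞) := by
  rw [lintegral_countable']
  have : ∀ n : ℕ, (n : ℝ≥0∞) * poissonMeasure r {n}
      = ENNReal.ofReal ((n : ℝ) * poissonPMFReal r n) := by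
    intro n
    rw [pois_singleton, ENNReal.ofReal_mul (by positivity), ENNReal.ofReal_natCast]
  rw [tsum_congr this, ← ENNReal.ofReal_tsum_of_nonneg
    (fun n => mul_nonneg (Nat.cast_nonneg n) poissonPMFReal_nonneg) (pois_mean_hasSum r).summable, (pois_mean_hasSum r).tsum_eq]
  simp [ENNReal.ofReal_coe_nnreal]

lemma pois_integrable_cast {Ω : Type*} [MeasurableSpace Ω] {P : Measure Ω} {X : Ω → ℕ}
    (hX : Measurable X) {r : ℝ≥0} (h : Measure.map X P = poissonMeasure r) :
    Integrable (fun ω => (X ω : ℝ)) P := by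
  have hmi : Integrable (fun n : ℕ => (n : ℝ)) (poissonMeasure r) := by
    refine ⟨(measurable_of_countable _).aestronglyMeasurable, ?_⟩
    rw [HasFiniteIntegral]
    have : ∀ n : ℕ, (‖(n : ℝ)‖₊ : ℝ≥0∞) = (n : ℝ≥0∞) := by
      intro n; simp [Real.nnnorm_natCast]
    calc ∫⁻ n, (‖(n : ℝ)‖₊ : ℝ≥0∞) ∂(poissonMeasure r)
        = ∫⁻ n, (n : ℝ≥0∞) ∂(poissonMeasure r) := lintegral_congr this
      _ = (r : ℝ≥0∞) := pois_lintegral r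
      _ < ⊤ := ENNReal.coe_lt_top
  have := (integrable_map_measure (measurable_of_countable _).aestronglyMeasurable
    hX.aemeasurable).mp (h ▸ hmi)
  exact this

lemma thin_hasSum {Δ : ℝ} (hΔ : Δ ∈ Set.Ioc (0:ℝ) 1) (r : ℝ≥0) (j : ℕ) :
    HasSum (fun k : ℕ => poissonPMFReal r k * ((k.choose j : ℝ) * Δ ^ j * (1 - Δ) ^ (k - j)))
      (poissonPMFReal (Δ * r).toNNReal j) := by
  set x : ℝ := (r : ℝ) * (1 - Δ) with hx
  set A : ℝ := exp (-(r : ℝ)) * Δ ^ j * (r : ℝ) ^ j / (Nat.factorial j) with hA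
  have hexp : HasSum (fun m : ℕ => x ^ m / (Nat.factorial m)) (exp x) := by
    rw [exp_eq_exp_ℝ]
    exact NormedSpace.expSeries_div_hasSum_exp x
  have hsum := hexp.mul_left A
  have key : (fun m : ℕ => poissonPMFReal r (m + j) *
      (((m + j).choose j : ℝ) * Δ ^ j * (1 - Δ) ^ ((m + j) - j))) =
      fun m => A * (x ^ m / (Nat.factorial m)) := by
    ext m
    have hchoose : ((m + j).choose j : ℝ) * (Nat.factorial j) * (Nat.factorial m)
        = (Nat.factorial (m + j)) := by
      have := Nat.choose_mul_factorial_mul_factorial (Nat.le_add_left j m)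
      rw [Nat.add_sub_cancel] at this
      exact_mod_cast this
    unfold poissonPMFReal
    rw [hA, hx]
    have h1 : (Nat.factorial (m+j) : ℝ) ≠ 0 := Nat.cast_ne_zero.mpr (Nat.factorial_ne_zero _)
    have h2 : (Nat.factorial j : ℝ) ≠ 0 := Nat.cast_ne_zero.mpr (Nat.factorial_ne_zero _)
    have h3 : (Nat.factorial m : ℝ) ≠ 0 := Nat.cast_ne_zero.mpr (Nat.factorial_ne_zero _)
    rw [Nat.add_sub_cancel, mul_pow, pow_add]
    field_simp
    rw [← hchoose]
    ring
  have htail : HasSum (fun m : ℕ => poissonPMFReal r (m + j) *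
      (((m + j).choose j : ℝ) * Δ ^ j * (1 - Δ) ^ ((m + j) - j))) (A * exp x) := by
    rw [key]; exact hsum
  have hzero : ∀ i ∈ Finset.range j,
      poissonPMFReal r i * ((i.choose j : ℝ) * Δ ^ j * (1 - Δ) ^ (i - j)) = 0 := by
    intro i hi
    rw [Nat.choose_eq_zero_of_lt (Finset.mem_range.mp hi)]
    simp
  have := (hasSum_nat_add_iff (f := fun k : ℕ => poissonPMFReal r k *
      ((k.choose j : ℝ) * Δ ^ j * (1 - Δ) ^ (k - j))) j).mp htail
  rw [Finset.sum_eq_zero hzero, add_zero] at this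
  have hval : A * exp x = poissonPMFReal (Δ * r).toNNReal j := by
    unfold poissonPMFReal
    have hnn : (0:ℝ) ≤ Δ * r := mul_nonneg hΔ.1.le r.coe_nonneg
    rw [Real.coe_toNNReal _ hnn, hA, hx]
    rw [mul_pow]
    rw [div_mul_eq_mul_div]
    rw [show rexp (-(Δ * (r:ℝ))) = rexp (-(r:ℝ)) * rexp ((r:ℝ) * (1 - Δ)) from by
      rw [← Real.exp_add]; congr 1; ring]
    ring
  rwa [hval] at this

lemma conv_sum (a b : ℝ≥0) (n : ℕ) :
    ∑ i ∈ Finset.range (n + 1), poissonPMFReal a i * poissonPMFReal b (n - i)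
      = poissonPMFReal (a + b) n := by
  unfold poissonPMFReal
  have hab : ((a + b : ℝ≥0) : ℝ) = (a : ℝ) + b := by push_cast; ring
  rw [hab]
  have hexp : Real.exp (-((a:ℝ) + b)) = Real.exp (-(a:ℝ)) * Real.exp (-(b:ℝ)) := by
    rw [← Real.exp_add]; ring_nf
  rw [add_pow]
  rw [show Real.exp (-((a:ℝ)+b)) * (∑ i ∈ Finset.range (n+1), (a:ℝ)^i * (b:ℝ)^(n-i) * (n.choose i)) / (Nat.factorial n)
    = ∑ i ∈ Finset.range (n+1), Real.exp (-((a:ℝ)+b)) * ((a:ℝ)^i * (b:ℝ)^(n-i) * (n.choose i)) / (Nat.factorial n)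
    from by rw [Finset.mul_sum, Finset.sum_div]]
  apply Finset.sum_congr rfl
  intro i hi
  have hle : i ≤ n := Nat.lt_succ_iff.mp (Finset.mem_range.mp hi)
  have hchoose : (n.choose i : ℝ) * (Nat.factorial i) * (Nat.factorial (n - i))
      = (Nat.factorial n) := by
    exact_mod_cast Nat.choose_mul_factorial_mul_factorial hle
  have h1 : (Nat.factorial n : ℝ) ≠ 0 := Nat.cast_ne_zero.mpr (Nat.factorial_ne_zero _)
  have h2 : (Nat.factorial i : ℝ) ≠ 0 := Nat.cast_ne_zero.mpr (Nat.factorial_ne_zero _)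
  have h3 : (Nat.factorial (n-i) : ℝ) ≠ 0 := Nat.cast_ne_zero.mpr (Nat.factorial_ne_zero _)
  field_simp
  rw [hexp]
  rw [← hchoose]
  ring

lemma binom_mean (Δ : ℝ) (k : ℕ) (h1 : Δ + (1 - Δ) = 1) :
    ∑ j ∈ Finset.range (k + 1), (j : ℝ) * ((k.choose j : ℝ) * Δ ^ j * (1 - Δ) ^ (k - j))
      = Δ * k := by
  cases k with
  | zero => simp
  | succ m =>
    rw [Finset.sum_range_succ']
    simp only [Nat.cast_zero, zero_mul, add_zero]
    have hterm : ∀ i : ℕ, ((i + 1 : ℕ) : ℝ) * (((m+1).choose (i+1) : ℝ) * Δ ^ (i+1)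
        * (1 - Δ) ^ ((m+1) - (i+1)))
        = ((m + 1 : ℕ) : ℝ) * Δ * ((m.choose i : ℝ) * Δ ^ i * (1 - Δ) ^ (m - i)) := by
      intro i
      have : ((i+1) : ℕ) * ((m+1).choose (i+1)) = (m+1) * (m.choose i) := by
        rw [mul_comm, ← Nat.add_one_mul_choose_eq]
      have hc : ((i + 1 : ℕ) : ℝ) * (((m+1).choose (i+1)) : ℝ) = ((m+1 : ℕ) : ℝ) * (m.choose i : ℝ) := by
        exact_mod_cast this
      rw [Nat.succ_sub_succ, pow_succ']
      linear_combination (Δ * Δ ^ i * (1 - Δ) ^ (m - i)) * hc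
    rw [Finset.sum_congr rfl (fun i _ => hterm i), ← Finset.mul_sum]
    have hbin : ∑ i ∈ Finset.range (m + 1), (m.choose i : ℝ) * Δ ^ i * (1 - Δ) ^ (m - i) = 1 := by
      have h2 := add_pow Δ (1 - Δ) m
      rw [h1, one_pow] at h2
      rw [show (∑ i ∈ Finset.range (m+1), (m.choose i : ℝ) * Δ ^ i * (1-Δ)^(m-i))
        = ∑ i ∈ Finset.range (m+1), Δ ^ i * (1-Δ)^(m-i) * (m.choose i)
        from Finset.sum_congr rfl fun i _ => by ring, ← h2]
    rw [hbin]
    push_cast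
    ring

lemma pois_conv {Ω : Type*} [MeasurableSpace Ω] {P : Measure Ω} {X Y : Ω → ℕ}
    (hX : Measurable X) (hY : Measurable Y) (hXY : IndepFun X Y P) {a b : ℝ≥0}
    (ha : Measure.map X P = poissonMeasure a) (hb : Measure.map Y P = poissonMeasure b) :
    Measure.map (fun ω => X ω + Y ω) P = poissonMeasure (a + b) := by
  apply Measure.ext_of_singleton
  intro n
  rw [Measure.map_apply (f := fun ω => X ω + Y ω) (hX.add hY) (measurableSet_singleton n)]
  have hset : (fun ω => X ω + Y ω) ⁻¹' {n}
      = ⋃ i ∈ Finset.range (n + 1), (X ⁻¹' {i} ∩ Y ⁻¹' {n - i}) := by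
    ext ω
    simp only [Set.mem_preimage, Set.mem_singleton_iff, Set.mem_iUnion, Set.mem_inter_iff,
      Finset.mem_range]
    constructor
    · intro h
      exact ⟨X ω, by omega, rfl, by omega⟩
    · rintro ⟨i, hi, h1, h2⟩
      omega
  rw [hset, measure_biUnion_finset ?_ (fun i _ => (hX (measurableSet_singleton i)).inter
    (hY (measurableSet_singleton (n - i))))]
  swap
  · intro i hi k hk hik
    simp only [Finset.coe_range, Set.mem_Iio] at hi hk
    apply Set.disjoint_left.mpr
    rintro ω ⟨h1, -⟩ ⟨h3, -⟩
    simp only [Set.mem_preimage, Set.mem_singleton_iff] at h1 h3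
    exact hik (h1 ▸ h3 ▸ rfl)
  have hterm : ∀ i ∈ Finset.range (n + 1), P (X ⁻¹' {i} ∩ Y ⁻¹' {n - i})
      = ENNReal.ofReal (poissonPMFReal a i * poissonPMFReal b (n - i)) := by
    intro i _
    rw [hXY.measure_inter_preimage_eq_mul _ _ (measurableSet_singleton i)
      (measurableSet_singleton (n - i))]
    have h1 : P (X ⁻¹' {i}) = ENNReal.ofReal (poissonPMFReal a i) := map_pois_singleton hX ha i
    have h2 : P (Y ⁻¹' {n - i}) = ENNReal.ofReal (poissonPMFReal b (n - i)) :=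
      map_pois_singleton hY hb (n - i)
    rw [h1, h2, ← ENNReal.ofReal_mul poissonPMFReal_nonneg]
  rw [Finset.sum_congr rfl hterm, ← ENNReal.ofReal_sum_of_nonneg
    (fun i _ => mul_nonneg poissonPMFReal_nonneg poissonPMFReal_nonneg),
    conv_sum, pois_singleton]

lemma binom_nonneg {Δ : ℝ} (hΔ : Δ ∈ Set.Ioc (0:ℝ) 1) (k j : ℕ) :
    0 ≤ (k.choose j : ℝ) * Δ ^ j * (1 - Δ) ^ (k - j) := by
  have h1 : (0:ℝ) ≤ 1 - Δ := by linarith [hΔ.2]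
  have h2 : (0:ℝ) ≤ Δ := hΔ.1.le
  positivity

lemma thin_map {Ω : Type*} [MeasurableSpace Ω] {P : Measure Ω} {Δ : ℝ}
    (hΔ : Δ ∈ Set.Ioc (0:ℝ) 1) {lam : ℝ≥0} {K K' : Ω → ℕ}
    (hKmeas : Measurable K) (hK'meas : Measurable K')
    (hK : Measure.map K P = poissonMeasure lam)
    (hK' : ∀ k j : ℕ, P {ω | K ω = k ∧ K' ω = j}
      = P {ω | K ω = k} * ENNReal.ofReal ((k.choose j : ℝ) * Δ ^ j * (1 - Δ) ^ (k - j))) :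
    Measure.map K' P = poissonMeasure (Δ * lam).toNNReal := by
  apply Measure.ext_of_singleton
  intro j
  rw [Measure.map_apply hK'meas (measurableSet_singleton j)]
  have hset : K' ⁻¹' {j} = ⋃ k, {ω | K ω = k ∧ K' ω = j} := by
    ext ω
    simp only [Set.mem_preimage, Set.mem_singleton_iff, Set.mem_iUnion, Set.mem_setOf_eq]
    exact ⟨fun h => ⟨K ω, rfl, h⟩, fun ⟨k, _, h⟩ => h⟩
  have hmeas : ∀ k : ℕ, MeasurableSet {ω | K ω = k ∧ K' ω = j} := by
    intro k
    have : {ω | K ω = k ∧ K' ω = j} = K ⁻¹' {k} ∩ K' ⁻¹' {j} := rfl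
    rw [this]
    exact (hKmeas (measurableSet_singleton k)).inter (hK'meas (measurableSet_singleton j))
  have hdisj : Pairwise (Function.onFun Disjoint fun k => {ω | K ω = k ∧ K' ω = j}) := by
    intro k l hkl
    apply Set.disjoint_left.mpr
    rintro ω ⟨h1, -⟩ ⟨h2, -⟩
    exact hkl (h1 ▸ h2 ▸ rfl)
  rw [hset, measure_iUnion hdisj hmeas]
  have hterm : ∀ k : ℕ, P {ω | K ω = k ∧ K' ω = j}
      = ENNReal.ofReal (poissonPMFReal lam k * ((k.choose j : ℝ) * Δ ^ j * (1 - Δ) ^ (k - j))) := by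
    intro k
    rw [hK' k j, map_pois_singleton hKmeas hK k,
      ← ENNReal.ofReal_mul poissonPMFReal_nonneg]
  rw [tsum_congr hterm, ← ENNReal.ofReal_tsum_of_nonneg
    (fun k => mul_nonneg poissonPMFReal_nonneg (binom_nonneg hΔ k j))
    (thin_hasSum hΔ lam j).summable, (thin_hasSum hΔ lam j).tsum_eq, pois_singleton]

theorem cond_part {Ω : Type*} [mΩ : MeasurableSpace Ω] (P : Measure Ω) [IsProbabilityMeasure P]
    (Δ c : ℝ) (hΔ : Δ ∈ Set.Ioc (0 : ℝ) 1) (hc : 0 ≤ c)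
    (lam : ℝ≥0) (z : ℕ)
    (K K' Z' : Ω → ℕ) (hKmeas : Measurable K) (hK'meas : Measurable K')
    (hZ'meas : Measurable Z')
    (hK : Measure.map K P = poissonMeasure lam)
    (hK' : ∀ k j : ℕ, P {ω | K ω = k ∧ K' ω = j}
      = P {ω | K ω = k} * ENNReal.ofReal ((k.choose j : ℝ) * Δ ^ j * (1 - Δ) ^ (k - j)))
    (hZ' : Measure.map Z' P = poissonMeasure (Δ * (z : ℝ) + c).toNNReal)
    (hindep : IndepFun Z' (fun ω => (K ω, K' ω)) P)
    (h1 : Measure.map K' P = poissonMeasure (Δ * (lam : ℝ)).toNNReal) :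
    P[(fun ω => ((Z' ω + K' ω : ℕ) : ℝ)) | MeasurableSpace.comap K inferInstance]
        =ᵐ[P] fun ω => Δ * ((z : ℝ) + (K ω : ℝ)) + c := by
  have hm : MeasurableSpace.comap K inferInstance ≤ mΩ := hKmeas.comap_le
  have hPK : ∀ k : ℕ, P {ω | K ω = k} = Measure.map K P {k} := by
    intro k
    rw [Measure.map_apply hKmeas (measurableSet_singleton k)]
    rfl
  have hznn : (0:ℝ) ≤ Δ * (z : ℝ) + c := by
    have := hΔ.1.le
    positivity
  haveI : SigmaFinite (P.trim hm) := by
    have : IsFiniteMeasure (P.trim hm) := isFiniteMeasure_trim hm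
    infer_instance
  -- measurability of casts
  have hZr : Measurable (fun ω => (Z' ω : ℝ)) := (measurable_of_countable _).comp hZ'meas
  have hKr : Measurable (fun ω => (K ω : ℝ)) := (measurable_of_countable _).comp hKmeas
  have hK'r : Measurable (fun ω => (K' ω : ℝ)) := (measurable_of_countable _).comp hK'meas
  have hfmeas : Measurable (fun ω => ((Z' ω + K' ω : ℕ) : ℝ)) :=
    (measurable_of_countable (fun n : ℕ => (n : ℝ))).comp (hZ'meas.add hK'meas)
  have hgmeas : Measurable (fun ω => Δ * ((z : ℝ) + (K ω : ℝ)) + c) := by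
    exact ((measurable_const.add hKr).const_mul Δ).add_const c
  -- integrability
  have hintZ : Integrable (fun ω => (Z' ω : ℝ)) P := pois_integrable_cast hZ'meas hZ'
  have hintK' : Integrable (fun ω => (K' ω : ℝ)) P := pois_integrable_cast hK'meas h1
  have hintK : Integrable (fun ω => (K ω : ℝ)) P := pois_integrable_cast hKmeas hK
  have hf : Integrable (fun ω => ((Z' ω + K' ω : ℕ) : ℝ)) P := by
    have := hintZ.add hintK'
    refine this.congr (ae_of_all _ fun ω => ?_)
    simp only [Pi.add_apply]
    push_cast; ring
  have hg : Integrable (fun ω => Δ * ((z : ℝ) + (K ω : ℝ)) + c) P := by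
    exact (((integrable_const ((z:ℝ))).add hintK).const_mul Δ).add (integrable_const c)
  -- m-measurability of g
  have hgm : AEStronglyMeasurable[MeasurableSpace.comap K inferInstance]
      (fun ω => Δ * ((z : ℝ) + (K ω : ℝ)) + c) P := by
    apply StronglyMeasurable.aestronglyMeasurable
    apply Measurable.stronglyMeasurable
    have hKm : Measurable[MeasurableSpace.comap K inferInstance] K :=
      Measurable.of_comap_le le_rfl
    exact Measurable.comp (measurable_of_countable (fun k : ℕ => Δ * ((z:ℝ) + k) + c)) hKm
  symm
  refine ae_eq_condExp_of_forall_setIntegral_eq hm hf (fun s _ _ => hg.integrableOn)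
    (fun s hs _ => ?_) hgm
  obtain ⟨A, -, rfl⟩ := hs
  have hsA : MeasurableSet (K ⁻¹' A) := hKmeas (MeasurableSet.of_discrete (s := A))
  -- pass to lintegrals
  rw [integral_eq_lintegral_of_nonneg_ae (ae_of_all _ fun x => by
        have := hΔ.1.le; positivity)
      (hgmeas.aestronglyMeasurable.restrict),
    integral_eq_lintegral_of_nonneg_ae (ae_of_all _ fun x => Nat.cast_nonneg _)
      (hfmeas.aestronglyMeasurable.restrict)]
  congr 1
  -- now an equality of lintegrals
  -- Step D : P (K ⁻¹' A) as a tsum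
  have hD : P (K ⁻¹' A) = ∑' k : ℕ, A.indicator (1 : ℕ → ℝ≥0∞) k * P {ω | K ω = k} := by
    rw [← lintegral_indicator_one hsA]
    have : ∀ x, (K ⁻¹' A).indicator (1 : Ω → ℝ≥0∞) x
        = A.indicator (1 : ℕ → ℝ≥0∞) (K x) := by
      intro x
      by_cases hx : K x ∈ A <;> simp [Set.indicator_apply, hx]
    rw [lintegral_congr this,
      ← lintegral_map (measurable_of_countable (A.indicator (1 : ℕ → ℝ≥0∞))) hKmeas,
      lintegral_countable']
    exact tsum_congr fun k => by rw [hPK k]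
  -- Step A : lintegral of Z' over the set
  have hA1 : ∫⁻ x in K ⁻¹' A, (Z' x : ℝ≥0∞) ∂P
      = ENNReal.ofReal (Δ * (z : ℝ) + c) * P (K ⁻¹' A) := by
    have hZe : Measurable (fun ω => (Z' ω : ℝ≥0∞)) :=
      (measurable_of_countable (fun n : ℕ => (n : ℝ≥0∞))).comp hZ'meas
    have hIe : Measurable (fun ω => A.indicator (1 : ℕ → ℝ≥0∞) (K ω)) :=
      (measurable_of_countable (A.indicator (1 : ℕ → ℝ≥0∞))).comp hKmeas
    have hZK : IndepFun Z' K P :=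
      hindep.comp measurable_id (measurable_fst : Measurable (Prod.fst : ℕ × ℕ → ℕ))
    have hind : IndepFun (fun ω => (Z' ω : ℝ≥0∞))
        (fun ω => A.indicator (1 : ℕ → ℝ≥0∞) (K ω)) P := by
      exact hZK.comp (measurable_of_countable (fun n : ℕ => (n : ℝ≥0∞)))
        (measurable_of_countable (A.indicator (1 : ℕ → ℝ≥0∞)))
    have hpt : ∀ x, (K ⁻¹' A).indicator (fun x => (Z' x : ℝ≥0∞)) x
        = ((fun ω => (Z' ω : ℝ≥0∞)) * fun ω => A.indicator (1 : ℕ → ℝ≥0∞) (K ω)) x := by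
      intro x
      by_cases hx : K x ∈ A <;> simp [Set.indicator_apply, hx]
    rw [← lintegral_indicator hsA, lintegral_congr hpt,
      lintegral_mul_eq_lintegral_mul_lintegral_of_indepFun hZe hIe hind]
    congr 1
    · rw [show ∫⁻ ω, (Z' ω : ℝ≥0∞) ∂P = ∫⁻ n, (n : ℝ≥0∞) ∂(Measure.map Z' P) from
        (lintegral_map (measurable_of_countable (fun n : ℕ => (n : ℝ≥0∞))) hZ'meas).symm,
        hZ', pois_lintegral]
      simp [ENNReal.ofReal]
    · have hpt2 : ∀ x, A.indicator (1 : ℕ → ℝ≥0∞) (K x)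
          = (K ⁻¹' A).indicator (1 : Ω → ℝ≥0∞) x := by
        intro x
        by_cases hx : K x ∈ A <;> simp [Set.indicator_apply, hx]
      rw [lintegral_congr hpt2, lintegral_indicator_one hsA]
  -- Step B : lintegral of K' over the set
  have hB : ∫⁻ x in K ⁻¹' A, (K' x : ℝ≥0∞) ∂P
      = ∑' k : ℕ, A.indicator (fun k => ENNReal.ofReal (Δ * (k:ℝ))) k * P {ω | K ω = k} := by
    rw [← lintegral_indicator hsA]
    have hpt : ∀ x, (K ⁻¹' A).indicator (fun x => (K' x : ℝ≥0∞)) x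
        = (fun p : ℕ × ℕ => A.indicator (1 : ℕ → ℝ≥0∞) p.1 * (p.2 : ℝ≥0∞)) (K x, K' x) := by
      intro x
      by_cases hx : K x ∈ A <;> simp [Set.indicator_apply, hx]
    rw [lintegral_congr hpt,
      ← lintegral_map (measurable_of_countable
        (fun p : ℕ × ℕ => A.indicator (1 : ℕ → ℝ≥0∞) p.1 * (p.2 : ℝ≥0∞)))
        (hKmeas.prodMk hK'meas),
      lintegral_countable', ENNReal.tsum_prod']
    apply tsum_congr
    intro k
    have hμ2 : ∀ j : ℕ, Measure.map (fun x => (K x, K' x)) P {(k, j)}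
        = P {ω | K ω = k} * ENNReal.ofReal ((k.choose j : ℝ) * Δ ^ j * (1 - Δ) ^ (k - j)) := by
      intro j
      rw [Measure.map_apply (hKmeas.prodMk hK'meas) (measurableSet_singleton _)]
      rw [show (fun x => (K x, K' x)) ⁻¹' {(k, j)} = {ω | K ω = k ∧ K' ω = j} from by
        ext ω; simp [Prod.ext_iff]]
      exact hK' k j
    have hinner : ∑' j : ℕ, A.indicator (1 : ℕ → ℝ≥0∞) k * (j : ℝ≥0∞)
        * Measure.map (fun x => (K x, K' x)) P {(k, j)}
        = A.indicator (1 : ℕ → ℝ≥0∞) k * P {ω | K ω = k} * ENNReal.ofReal (Δ * (k:ℝ)) := by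
      have hmean : ∑' j : ℕ, (j : ℝ≥0∞)
          * ENNReal.ofReal ((k.choose j : ℝ) * Δ ^ j * (1 - Δ) ^ (k - j))
          = ENNReal.ofReal (Δ * (k:ℝ)) := by
        rw [tsum_eq_sum (s := Finset.range (k+1)) (fun j hj => by
          have hkj : k < j := by simp only [Finset.mem_range] at hj; omega
          rw [Nat.choose_eq_zero_of_lt hkj]
          simp)]
        have hterm : ∀ j ∈ Finset.range (k+1), (j : ℝ≥0∞)
            * ENNReal.ofReal ((k.choose j : ℝ) * Δ ^ j * (1 - Δ) ^ (k - j))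
            = ENNReal.ofReal ((j:ℝ) * ((k.choose j : ℝ) * Δ ^ j * (1 - Δ) ^ (k - j))) := by
          intro j _
          rw [ENNReal.ofReal_mul (Nat.cast_nonneg j), ENNReal.ofReal_natCast]
        rw [Finset.sum_congr rfl hterm, ← ENNReal.ofReal_sum_of_nonneg
          (fun j _ => mul_nonneg (Nat.cast_nonneg j) (binom_nonneg hΔ k j)),
          binom_mean Δ k (by ring)]
      calc ∑' j : ℕ, A.indicator (1 : ℕ → ℝ≥0∞) k * (j : ℝ≥0∞)
            * Measure.map (fun x => (K x, K' x)) P {(k, j)}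
          = ∑' j : ℕ, (A.indicator (1 : ℕ → ℝ≥0∞) k * P {ω | K ω = k})
            * ((j : ℝ≥0∞) * ENNReal.ofReal ((k.choose j : ℝ) * Δ ^ j * (1 - Δ) ^ (k - j))) := by
            apply tsum_congr; intro j; rw [hμ2 j]; ring
        _ = (A.indicator (1 : ℕ → ℝ≥0∞) k * P {ω | K ω = k})
            * ∑' j : ℕ, (j : ℝ≥0∞) * ENNReal.ofReal ((k.choose j : ℝ) * Δ ^ j * (1 - Δ) ^ (k - j)) :=
            ENNReal.tsum_mul_left
        _ = A.indicator (1 : ℕ → ℝ≥0∞) k * P {ω | K ω = k} * ENNReal.ofReal (Δ * (k:ℝ)) := by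
            rw [hmean]
    rw [show ∑' j : ℕ, (fun p : ℕ × ℕ => A.indicator (1 : ℕ → ℝ≥0∞) p.1 * (p.2 : ℝ≥0∞)) (k, j)
        * Measure.map (fun x => (K x, K' x)) P {(k, j)}
        = ∑' j : ℕ, A.indicator (1 : ℕ → ℝ≥0∞) k * (j : ℝ≥0∞)
        * Measure.map (fun x => (K x, K' x)) P {(k, j)} from rfl, hinner]
    by_cases hk : k ∈ A <;> simp [Set.indicator_apply, hk, mul_comm]
  -- Step C : lintegral of g over the set
  have hC : ∫⁻ x in K ⁻¹' A, ENNReal.ofReal (Δ * ((z : ℝ) + (K x : ℝ)) + c) ∂P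
      = ∑' k : ℕ, A.indicator (fun k => ENNReal.ofReal (Δ * ((z:ℝ) + (k:ℝ)) + c)) k
        * P {ω | K ω = k} := by
    rw [← lintegral_indicator hsA]
    have hpt : ∀ x, (K ⁻¹' A).indicator
        (fun x => ENNReal.ofReal (Δ * ((z : ℝ) + (K x : ℝ)) + c)) x
        = A.indicator (fun k : ℕ => ENNReal.ofReal (Δ * ((z:ℝ) + (k:ℝ)) + c)) (K x) := by
      intro x
      by_cases hx : K x ∈ A <;> simp [Set.indicator_apply, hx]
    rw [lintegral_congr hpt,
      ← lintegral_map (measurable_of_countable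
        (A.indicator (fun k : ℕ => ENNReal.ofReal (Δ * ((z:ℝ) + (k:ℝ)) + c)))) hKmeas,
      lintegral_countable']
    exact tsum_congr fun k => by rw [hPK k]
  -- combine
  have hsplit : ∫⁻ x in K ⁻¹' A, ENNReal.ofReal ((Z' x + K' x : ℕ) : ℝ) ∂P
      = ∫⁻ x in K ⁻¹' A, (Z' x : ℝ≥0∞) ∂P + ∫⁻ x in K ⁻¹' A, (K' x : ℝ≥0∞) ∂P := by
    rw [← lintegral_add_left (f := fun x => (Z' x : ℝ≥0∞))
      ((measurable_of_countable (fun n : ℕ => (n : ℝ≥0∞))).comp hZ'meas)]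
    apply lintegral_congr
    intro x
    rw [ENNReal.ofReal_natCast]
    push_cast
    rfl
  rw [hC, hsplit, hA1, hB, hD, ← ENNReal.tsum_mul_left, ← ENNReal.tsum_add]
  apply tsum_congr
  intro k
  by_cases hk : k ∈ A
  · have h0 : (0:ℝ) ≤ Δ := hΔ.1.le
    simp only [Set.indicator_of_mem hk, Pi.one_apply, one_mul]
    rw [← add_mul]
    congr 1
    rw [← ENNReal.ofReal_add hznn (by positivity)]
    congr 1; ring
  · simp [Set.indicator_of_notMem hk]

/-- **Poisson thinning coupling (sufficiency argument in Theorem 4.1 of the paper).**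
Let `Δ ∈ (0,1]`, `c ≥ 0`, `λ > 0`, `z ∈ ℕ`. Let `K ∼ Poisson(λ)`, let `K′ | K = k ∼
Binomial(k, Δ)`, and let `Z′ ∼ Poisson(Δz + c)` be independent of `(K, K′)`. Then
(1) `K′ ∼ Poisson(Δλ)`; (2) `Z′ + K′ ∼ Poisson(Δ(z+λ)+c)`; and
(3) `E[Z′ + K′ | σ(K)] = Δ(z + K) + c` a.s. -/
theorem stmt_8 {Ω : Type*} [mΩ : MeasurableSpace Ω] (P : Measure Ω) [IsProbabilityMeasure P]
    (Δ c : ℝ) (hΔ : Δ ∈ Set.Ioc (0 : ℝ) 1) (hc : 0 ≤ c)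
    (lam : ℝ≥0) (hlam : 0 < lam) (z : ℕ)
    (K K' Z' : Ω → ℕ) (hKmeas : Measurable K) (hK'meas : Measurable K')
    (hZ'meas : Measurable Z')
    (hK : Measure.map K P = poissonMeasure lam)
    (hK' : ∀ k j : ℕ, P {ω | K ω = k ∧ K' ω = j}
      = P {ω | K ω = k} * ENNReal.ofReal ((k.choose j : ℝ) * Δ ^ j * (1 - Δ) ^ (k - j)))
    (hZ' : Measure.map Z' P = poissonMeasure (Δ * (z : ℝ) + c).toNNReal)
    (hindep : IndepFun Z' (fun ω => (K ω, K' ω)) P) :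
    Measure.map K' P = poissonMeasure (Δ * (lam : ℝ)).toNNReal
    ∧ Measure.map (fun ω => Z' ω + K' ω) P
        = poissonMeasure (Δ * ((z : ℝ) + (lam : ℝ)) + c).toNNReal
    ∧ P[(fun ω => ((Z' ω + K' ω : ℕ) : ℝ)) | MeasurableSpace.comap K inferInstance]
        =ᵐ[P] fun ω => Δ * ((z : ℝ) + (K ω : ℝ)) + c := by
  have hznn : (0:ℝ) ≤ Δ * (z : ℝ) + c := by
    have := hΔ.1.le
    positivity
  have hlnn : (0:ℝ) ≤ Δ * (lam : ℝ) := mul_nonneg hΔ.1.le lam.coe_nonneg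
  have h1 : Measure.map K' P = poissonMeasure (Δ * (lam : ℝ)).toNNReal :=
    thin_map hΔ hKmeas hK'meas hK hK'
  have h2 : Measure.map (fun ω => Z' ω + K' ω) P
      = poissonMeasure (Δ * ((z : ℝ) + (lam : ℝ)) + c).toNNReal := by
    have hZK' : IndepFun Z' K' P :=
      hindep.comp measurable_id (measurable_snd : Measurable (Prod.snd : ℕ × ℕ → ℕ))
    have harg : (Δ * (z : ℝ) + c).toNNReal + (Δ * (lam : ℝ)).toNNReal
        = (Δ * ((z : ℝ) + (lam : ℝ)) + c).toNNReal := by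
      rw [← Real.toNNReal_add hznn hlnn]
      congr 1; ring
    rw [← harg]
    exact pois_conv hZ'meas hK'meas hZK' hZ' h1
  exact ⟨h1, h2, cond_part P Δ c hΔ hc lam z K K' Z' hKmeas hK'meas hZ'meas hK hK' hZ' hindep h1⟩
end

section
/- Let a > 0, b > 0, z ≥ 0, Δ ∈ (0, 1] and c ≥ 0. Let Θ be a random variable with Gamma(a + z, b) distribution and let Y be a random variable with Gamma(a, b′) distribution, where b′ := ab/(Δ(a + z) + cb) (so that E[Y] = a/b′ = Δ(a + z)/b + c). Then ΔΘ + c ⪯_cx Y, i.e., E[ΔΘ + c] = E[Y] and E[φ(ΔΘ + c)] ≤ E[φ(Y)] for every convex function φ : ℝ → ℝ such that φ(ΔΘ + c) and φ(Y) are both integrable. -/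
open MeasureTheory ProbabilityTheory Real Set

namespace Cor51

lemma pdf_def (a r x : ℝ) :
    gammaPDFReal a r x = if 0 ≤ x then r ^ a / Real.Gamma a * x ^ (a - 1) * Real.exp (-(r * x)) else 0 := rfl

lemma integral_pdf_one {a r : ℝ} (ha : 0 < a) (hr : 0 < r) :
    ∫ x, gammaPDFReal a r x = 1 := by
  rw [integral_eq_lintegral_of_nonneg_ae (ae_of_all _ (gammaPDFReal_nonneg ha hr))
      (measurable_gammaPDFReal a r).aestronglyMeasurable]
  rw [show (fun x => ENNReal.ofReal (gammaPDFReal a r x)) = gammaPDF a r from rfl,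
    lintegral_gammaPDF_eq_one ha hr]
  simp

lemma integrable_pdf {a r : ℝ} (ha : 0 < a) (hr : 0 < r) :
    Integrable (gammaPDFReal a r) := by
  refine ⟨(measurable_gammaPDFReal a r).aestronglyMeasurable, ?_⟩
  rw [hasFiniteIntegral_iff_ofReal (ae_of_all _ (gammaPDFReal_nonneg ha hr))]
  rw [show (fun x => ENNReal.ofReal (gammaPDFReal a r x)) = gammaPDF a r from rfl,
    lintegral_gammaPDF_eq_one ha hr]
  simp

lemma pdf_shape_succ {a r : ℝ} (ha : 0 < a) (hr : 0 < r) (x : ℝ) :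
    x * gammaPDFReal a r x = (a / r) * gammaPDFReal (a + 1) r x := by
  rw [pdf_def, pdf_def]
  split_ifs with hx
  · rcases eq_or_lt_of_le hx with h0 | h0
    · rw [← h0]
      rw [show a + 1 - 1 = a by ring, Real.zero_rpow ha.ne']
      ring
    · have hxa : x ^ (a + 1 - 1) = x * x ^ (a - 1) := by
        rw [show a + 1 - 1 = (a - 1) + 1 by ring, Real.rpow_add h0, Real.rpow_one]; ring
      have hΓ : Real.Gamma (a + 1) = a * Real.Gamma a := Real.Gamma_add_one ha.ne'
      have hra : r ^ (a + 1) = r * r ^ a := by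
        rw [Real.rpow_add hr, Real.rpow_one]; ring
      have hΓa : Real.Gamma a ≠ 0 := (Real.Gamma_pos_of_pos ha).ne'
      rw [hxa, hΓ, hra]
      field_simp
  · ring

lemma integrable_id_pdf {a r : ℝ} (ha : 0 < a) (hr : 0 < r) :
    Integrable (fun x => x * gammaPDFReal a r x) := by
  refine (Integrable.congr (((integrable_pdf (by linarith : (0:ℝ) < a + 1) hr).const_mul (a / r))) ?_)
  exact ae_of_all _ fun x => (pdf_shape_succ ha hr x).symm

lemma integral_id_pdf {a r : ℝ} (ha : 0 < a) (hr : 0 < r) :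
    ∫ x, x * gammaPDFReal a r x = a / r := by
  simp_rw [pdf_shape_succ ha hr]
  rw [integral_const_mul, integral_pdf_one (by linarith) hr, mul_one]


lemma gammaMeasure_eq (a r : ℝ) :
    gammaMeasure a r = volume.withDensity (fun x => ((gammaPDFReal a r x).toNNReal : ENNReal)) := rfl

lemma meas_toNNReal (a r : ℝ) : Measurable (fun x => (gammaPDFReal a r x).toNNReal) :=
  (measurable_gammaPDFReal a r).real_toNNReal

lemma integral_gamma {a r : ℝ} (ha : 0 < a) (hr : 0 < r) (φ : ℝ → ℝ) :
    ∫ x, φ x ∂(gammaMeasure a r) = ∫ x, gammaPDFReal a r x * φ x := by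
  rw [gammaMeasure_eq, integral_withDensity_eq_integral_smul (meas_toNNReal a r) φ]
  refine integral_congr_ae (ae_of_all _ fun x => ?_)
  simp [NNReal.smul_def, Real.coe_toNNReal _ (gammaPDFReal_nonneg ha hr x)]

lemma integrable_gamma_iff {a r : ℝ} (ha : 0 < a) (hr : 0 < r) {φ : ℝ → ℝ} :
    Integrable φ (gammaMeasure a r) ↔ Integrable (fun x => gammaPDFReal a r x * φ x) := by
  rw [gammaMeasure_eq, integrable_withDensity_iff_integrable_smul (meas_toNNReal a r)]
  constructor <;> intro h <;> refine h.congr (ae_of_all _ fun x => ?_) <;>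
    simp [NNReal.smul_def, Real.coe_toNNReal _ (gammaPDFReal_nonneg ha hr x)]

/-- scaling identity for the gamma pdf -/
lemma pdf_scale {k b t : ℝ} (hk : 0 < k) (hb : 0 < b) (ht : 0 < t) (x : ℝ) :
    gammaPDFReal k b x = t * gammaPDFReal k (b / t) (t * x) := by
  rw [pdf_def, pdf_def]
  have h2 : (0 ≤ t * x) ↔ (0 ≤ x) := by
    constructor
    · intro h; nlinarith
    · intro h; positivity
  by_cases hx : 0 ≤ x
  · rw [if_pos hx, if_pos (h2.mpr hx)]
    rcases eq_or_lt_of_le hx with h0 | h0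
    · rw [← h0]
      rcases eq_or_ne k 1 with hk1 | hk1
      · subst hk1
        simp only [sub_self, Real.rpow_zero, Real.rpow_one, mul_one, mul_zero, neg_zero,
          Real.exp_zero]
        field_simp
      · simp [Real.zero_rpow (sub_ne_zero.mpr hk1)]
    · have e1 : (t * x) ^ (k - 1) = t ^ (k - 1) * x ^ (k - 1) :=
        Real.mul_rpow ht.le h0.le
      have e2 : (b / t) ^ k = b ^ k / t ^ k := Real.div_rpow hb.le ht.le k
      have e3 : t ^ k = t ^ (k - 1) * t := by
        nth_rewrite 1 [show k = (k - 1) + 1 by ring]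
        rw [Real.rpow_add ht, Real.rpow_one]
      have e4 : b / t * (t * x) = b * x := by field_simp
      rw [e1, e2, e3, e4]
      have h5 : t ^ (k - 1) ≠ 0 := (Real.rpow_pos_of_pos ht _).ne'
      field_simp
  · rw [if_neg hx, if_neg (fun h => hx (h2.mp h))]; ring


lemma chord_above {φ : ℝ → ℝ} (hφ : ConvexOn ℝ Set.univ φ) {x₁ x₂ : ℝ} (h12 : x₁ < x₂)
    {x : ℝ} (hx : x ∈ Icc x₁ x₂) :
    φ x ≤ φ x₁ + (φ x₂ - φ x₁) / (x₂ - x₁) * (x - x₁) := by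
  have hd : (0:ℝ) < x₂ - x₁ := by linarith
  have hcomb := hφ.2 (Set.mem_univ x₁) (Set.mem_univ x₂)
    (div_nonneg (by linarith [hx.2] : (0:ℝ) ≤ x₂ - x) hd.le)
    (div_nonneg (by linarith [hx.1] : (0:ℝ) ≤ x - x₁) hd.le)
    (by field_simp; ring)
  have hxeq : (((x₂ - x) / (x₂ - x₁)) • x₁ + ((x - x₁) / (x₂ - x₁)) • x₂ : ℝ) = x := by
    simp only [smul_eq_mul]; field_simp; ring
  rw [hxeq] at hcomb
  refine hcomb.trans (le_of_eq ?_)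
  simp only [smul_eq_mul]
  field_simp
  ring

lemma chord_below {φ : ℝ → ℝ} (hφ : ConvexOn ℝ Set.univ φ) {x₁ x₂ : ℝ} (h12 : x₁ < x₂)
    {x : ℝ} (hx : x ≤ x₁ ∨ x₂ ≤ x) :
    φ x₁ + (φ x₂ - φ x₁) / (x₂ - x₁) * (x - x₁) ≤ φ x := by
  have hd : (0:ℝ) < x₂ - x₁ := by linarith
  rcases hx with hx | hx
  · rcases eq_or_lt_of_le hx with h1 | h1
    · rw [h1]; simp
    have hs := hφ.slope_mono_adjacent (Set.mem_univ x) (Set.mem_univ x₂) h1 h12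
    rw [div_le_div_iff₀ (by linarith) hd] at hs
    have h1x : (0:ℝ) < x₁ - x := by linarith
    rw [← sub_nonneg]
    have expand : φ x - (φ x₁ + (φ x₂ - φ x₁) / (x₂ - x₁) * (x - x₁))
        = ((φ x₂ - φ x₁) * (x₁ - x) - (φ x₁ - φ x) * (x₂ - x₁)) / (x₂ - x₁) := by
      field_simp; ring
    rw [expand]
    apply div_nonneg _ hd.le
    nlinarith [hs]
  · rcases eq_or_lt_of_le hx with h2 | h2
    · rw [← h2, div_mul_cancel₀ _ (sub_ne_zero.mpr h12.ne')]; ring_nf; exact le_rfl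
    have hs := hφ.slope_mono_adjacent (Set.mem_univ x₁) (Set.mem_univ x) h12 h2
    rw [div_le_div_iff₀ hd (by linarith)] at hs
    rw [← sub_nonneg]
    have expand : φ x - (φ x₁ + (φ x₂ - φ x₁) / (x₂ - x₁) * (x - x₁))
        = ((φ x - φ x₂) * (x₂ - x₁) - (φ x₂ - φ x₁) * (x - x₂)) / (x₂ - x₁) := by
      field_simp; ring
    rw [expand]
    apply div_nonneg _ hd.le
    nlinarith [hs]


lemma log_pdf {a r x : ℝ} (ha : 0 < a) (hr : 0 < r) (hx : 0 < x) :
    Real.log (gammaPDFReal a r x) =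
      Real.log (r ^ a / Real.Gamma a) + (a - 1) * Real.log x - r * x := by
  have h1 : r ^ a / Real.Gamma a ≠ 0 :=
    (div_pos (Real.rpow_pos_of_pos hr a) (Real.Gamma_pos_of_pos ha)).ne'
  have h2 : x ^ (a - 1) ≠ 0 := (Real.rpow_pos_of_pos hx _).ne'
  rw [pdf_def, if_pos hx.le, Real.log_mul (mul_ne_zero h1 h2) (Real.exp_ne_zero _),
    Real.log_mul h1 h2, Real.log_rpow hx, Real.log_exp]
  ring

lemma key {k a μ : ℝ} (ha : 0 < a) (hak : a ≤ k) (hμ : 0 < μ)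
    {φ : ℝ → ℝ} (hφ : ConvexOn ℝ Set.univ φ)
    (hgint : Integrable (fun x => gammaPDFReal a (a / μ) x * φ x)) :
    Integrable (fun x => gammaPDFReal k (k / μ) x * φ x) ∧
    ∫ x, gammaPDFReal k (k / μ) x * φ x ≤ ∫ x, gammaPDFReal a (a / μ) x * φ x := by
  rcases eq_or_lt_of_le hak with rfl | hak
  · exact ⟨hgint, le_rfl⟩
  have hk : 0 < k := lt_trans ha hak
  have hra : 0 < a / μ := div_pos ha hμ
  have hrf : 0 < k / μ := div_pos hk hμ
  set f : ℝ → ℝ := gammaPDFReal k (k / μ) with hfdef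
  set g : ℝ → ℝ := gammaPDFReal a (a / μ) with hgdef
  have hφc : Continuous φ := continuousOn_univ.mp (hφ.continuousOn isOpen_univ)
  have hfpos : ∀ x, 0 < x → 0 < f x := fun x hx => gammaPDFReal_pos hk hrf hx
  have hgpos : ∀ x, 0 < x → 0 < g x := fun x hx => gammaPDFReal_pos ha hra hx
  have hfnn : ∀ x, 0 ≤ f x := gammaPDFReal_nonneg hk hrf
  have hgnn : ∀ x, 0 ≤ g x := gammaPDFReal_nonneg ha hra
  have hfneg : ∀ x, x < 0 → f x = 0 := fun x hx => by rw [hfdef, pdf_def, if_neg (not_le.mpr hx)]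
  have hgneg : ∀ x, x < 0 → g x = 0 := fun x hx => by rw [hgdef, pdf_def, if_neg (not_le.mpr hx)]
  set C : ℝ := Real.log ((a / μ) ^ a / Real.Gamma a) - Real.log ((k / μ) ^ k / Real.Gamma k)
    with hCdef
  set q : ℝ → ℝ := fun x => C + (a - k) * Real.log x + ((k - a) / μ) * x with hqdef
  clear_value C
  have hq : ∀ x, 0 < x → q x = Real.log (g x) - Real.log (f x) := by
    intro x hx
    rw [hgdef, hfdef, log_pdf ha hra hx, log_pdf hk hrf hx, hqdef]
    simp only
    rw [hCdef]
    have : (k / μ) * x - (a / μ) * x = ((k - a) / μ) * x := by ring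
    ring
  have hgf_iff : ∀ x, 0 < x → (g x < f x ↔ q x < 0) := by
    intro x hx
    rw [hq x hx, sub_neg]
    exact (Real.log_lt_log_iff (hgpos x hx) (hfpos x hx)).symm
  set I : Set ℝ := {x ∈ Set.Ioi (0:ℝ) | q x < 0} with hIdef
  have hqconv : ConvexOn ℝ (Set.Ioi (0:ℝ)) q := by
    have h1 : ConvexOn ℝ (Set.Ioi (0:ℝ)) (fun x => (k - a) • (-Real.log x)) :=
      (strictConcaveOn_log_Ioi.concaveOn.neg).smul (by linarith)
    have h2 : ConvexOn ℝ (Set.Ioi (0:ℝ)) (fun x : ℝ => ((k - a) / μ) • (id x : ℝ)) :=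
      (convexOn_id (convex_Ioi 0)).smul (div_nonneg (by linarith) hμ.le)
    have h3 := ((convexOn_const C (convex_Ioi (0:ℝ))).add h1).add h2
    have heq : q = ((fun _ : ℝ => C) + fun x => (k - a) • (-Real.log x))
        + fun x : ℝ => ((k - a) / μ) • (id x : ℝ) := by
      funext x
      simp only [Pi.add_apply, smul_eq_mul, id]
      ring
    rw [heq]
    exact h3
  have hIconv : Convex ℝ I := hqconv.convex_lt 0
  have hqcont : ContinuousOn q (Set.Ioi (0:ℝ)) := by
    apply ContinuousOn.add
    apply ContinuousOn.add
    · exact continuousOn_const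
    · exact continuousOn_const.mul
        (Real.continuousOn_log.mono (fun x hx => ne_of_gt hx))
    · exact continuousOn_const.mul continuousOn_id
  have hIopen : IsOpen I := by
    have := hqcont.isOpen_inter_preimage isOpen_Ioi (isOpen_Iio (a := (0:ℝ)))
    exact this
  have hbound : ∀ x ∈ I, x ≤ ((k - a) * (Real.log (2 * μ) - 1) - C) * (2 * μ) / (k - a) := by
    intro x hx
    obtain ⟨hx0, hqx⟩ := hx
    have hx0 : (0:ℝ) < x := hx0
    have hlog : Real.log x ≤ x / (2 * μ) + (Real.log (2 * μ) - 1) := by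
      have h2μ : (0:ℝ) < 2 * μ := by linarith
      have := Real.log_le_sub_one_of_pos (div_pos hx0 h2μ)
      rw [Real.log_div hx0.ne' h2μ.ne'] at this
      linarith
    have hw : (0:ℝ) < k - a := by linarith
    rw [le_div_iff₀ hw]
    have hmul : (a - k) * Real.log x ≥ (a - k) * (x / (2 * μ) + (Real.log (2 * μ) - 1)) := by
      apply mul_le_mul_of_nonpos_left hlog (by linarith)
    rw [hqdef] at hqx
    simp only at hqx
    have h2μ : (0:ℝ) < 2 * μ := by linarith
    have hu : (k - a) / μ * x = 2 * (k - a) * (x / (2 * μ)) := by field_simp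
    have hxu : x = 2 * μ * (x / (2 * μ)) := by field_simp
    have hS : C - (k - a) * (Real.log (2 * μ) - 1) + (k - a) * (x / (2 * μ)) < 0 := by
      linarith [hqx, hmul, hu]
    have h6 : (k - a) * (x / (2 * μ)) < (k - a) * (Real.log (2 * μ) - 1) - C := by
      linarith [hS]
    have h7 : 2 * μ * ((k - a) * (x / (2 * μ))) ≤
        2 * μ * ((k - a) * (Real.log (2 * μ) - 1) - C) :=
      (mul_le_mul_iff_right₀ h2μ).mpr h6.le
    have h8 : 2 * μ * ((k - a) * (x / (2 * μ))) = x * (k - a) := by field_simp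
    nlinarith [h7, h8, hw, h2μ]
  by_cases hIne : I.Nonempty
  case neg =>
    -- I empty : f ≤ g away from 0, hence f = g a.e.
    rw [Set.not_nonempty_iff_eq_empty] at hIne
    have hge : ∀ x, x ≠ 0 → f x ≤ g x := by
      intro x hx0
      rcases lt_trichotomy x 0 with h | h | h
      · rw [hfneg x h, hgneg x h]
      · exact absurd h hx0
      · by_contra hlt
        push_neg at hlt
        have : x ∈ I := ⟨h, (hgf_iff x h).mp hlt⟩
        rw [hIne] at this
        exact this
    have hae : ∀ᵐ (x : ℝ), x ≠ 0 := by
      rw [ae_iff]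
      have he : {x : ℝ | ¬ x ≠ 0} = {0} := by ext x; simp
      rw [he]
      exact measure_singleton 0
    have hsubint : Integrable (fun x => g x - f x) :=
      (integrable_pdf ha hra).sub (integrable_pdf hk hrf)
    have hzero : ∫ x, (g x - f x) = 0 := by
      rw [integral_sub (integrable_pdf ha hra) (integrable_pdf hk hrf),
        integral_pdf_one ha hra, integral_pdf_one hk hrf, sub_self]
    have hfg_ae : (fun x => g x - f x) =ᵐ[volume] 0 := by
      rw [← integral_eq_zero_iff_of_nonneg_ae ?_ hsubint]
      · exact hzero
      · filter_upwards [hae] with x hx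
        simp only [Pi.zero_apply, sub_nonneg]
        exact hge x hx
    have heq_ae : f =ᵐ[volume] g := by
      filter_upwards [hfg_ae] with x hx
      simp only [Pi.zero_apply] at hx
      linarith
    constructor
    · exact hgint.congr (heq_ae.mono fun x hx => by simp only; rw [hx])
    · refine le_of_eq (integral_congr_ae ?_)
      exact heq_ae.mono fun x hx => by simp only; rw [hx]
  case pos =>
  obtain ⟨y0, hy0⟩ := hIne
  have hbdda : BddAbove I := ⟨_, fun x hx => hbound x hx⟩
  have hbddb : BddBelow I := ⟨0, fun x hx => (le_of_lt hx.1)⟩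
  set x₁ : ℝ := sInf I with hx1def
  set x₂ : ℝ := sSup I with hx2def
  obtain ⟨ε, hε, hball⟩ := Metric.isOpen_iff.mp hIopen y0 hy0
  have hmem1 : y0 - ε / 2 ∈ I := by
    apply hball
    rw [Metric.mem_ball, Real.dist_eq, show y0 - ε / 2 - y0 = -(ε / 2) by ring, abs_neg,
      abs_of_nonneg (by linarith)]
    linarith
  have hmem2 : y0 + ε / 2 ∈ I := by
    apply hball
    rw [Metric.mem_ball, Real.dist_eq, show y0 + ε / 2 - y0 = ε / 2 by ring,
      abs_of_nonneg (by linarith)]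
    linarith
  have h12 : x₁ < x₂ :=
    lt_of_le_of_lt (csInf_le hbddb hmem1) (lt_of_lt_of_le (by linarith) (le_csSup hbdda hmem2))
  have hIsub : I ⊆ Set.Ioo x₁ x₂ := by
    intro x hx
    obtain ⟨δ, hδ, hballx⟩ := Metric.isOpen_iff.mp hIopen x hx
    have hm1 : x - δ / 2 ∈ I := by
      apply hballx
      rw [Metric.mem_ball, Real.dist_eq, show x - δ / 2 - x = -(δ / 2) by ring, abs_neg,
        abs_of_nonneg (by linarith)]
      linarith
    have hm2 : x + δ / 2 ∈ I := by
      apply hballx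
      rw [Metric.mem_ball, Real.dist_eq, show x + δ / 2 - x = δ / 2 by ring,
        abs_of_nonneg (by linarith)]
      linarith
    constructor
    · exact lt_of_le_of_lt (csInf_le hbddb hm1) (by linarith)
    · exact lt_of_lt_of_le (by linarith) (le_csSup hbdda hm2)
  have hIoosub : Set.Ioo x₁ x₂ ⊆ I := by
    intro x hx
    obtain ⟨y, hyI, hyx⟩ := exists_lt_of_csInf_lt ⟨y0, hy0⟩ hx.1
    obtain ⟨y', hy'I, hxy'⟩ := exists_lt_of_lt_csSup ⟨y0, hy0⟩ hx.2
    exact hIconv.ordConnected.out hyI hy'I ⟨hyx.le, hxy'.le⟩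
  set s : ℝ := (φ x₂ - φ x₁) / (x₂ - x₁) with hsdef
  set ℓ : ℝ → ℝ := fun x => φ x₁ + s * (x - x₁) with hℓdef
  set p : ℝ → ℝ := fun x => φ x - ℓ x with hpdef
  have hℓcont : Continuous ℓ := by fun_prop
  have hpcont : Continuous p := hφc.sub hℓcont
  obtain ⟨M₀, hM₀⟩ := (isCompact_Icc (a := x₁) (b := x₂)).exists_bound_of_continuousOn
    hpcont.continuousOn
  set M : ℝ := max M₀ 0 with hMdef
  have hp_in : ∀ x ∈ Set.Icc x₁ x₂, p x ≤ 0 := by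
    intro x hx
    have := chord_above hφ h12 hx
    rw [hpdef]; simp only [hℓdef]; linarith
  have hp_out : ∀ x, x ∉ Set.Ioo x₁ x₂ → 0 ≤ p x := by
    intro x hx
    rw [Set.mem_Ioo, not_and_or] at hx
    push_neg at hx
    have : x ≤ x₁ ∨ x₂ ≤ x := by tauto
    have := chord_below hφ h12 this
    rw [hpdef]; simp only [hℓdef]; linarith
  have hp_lower : ∀ x, -M ≤ p x := by
    intro x
    by_cases hx : x ∈ Set.Icc x₁ x₂
    · have := hM₀ x hx
      rw [Real.norm_eq_abs] at this
      have h1 : -M₀ ≤ p x := neg_le_of_abs_le this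
      have : M₀ ≤ M := le_max_left _ _
      linarith
    · have h0 : 0 ≤ p x := by
        apply hp_out
        intro hmem
        exact hx ⟨hmem.1.le, hmem.2.le⟩
      have : (0:ℝ) ≤ M := le_max_right _ _
      linarith
  have hpt : ∀ x, x ≠ 0 → p x * f x ≤ p x * g x := by
    intro x hx0
    by_cases hxI : x ∈ Set.Ioo x₁ x₂
    · have hxmem : x ∈ I := hIoosub hxI
      have hxpos : (0:ℝ) < x := hxmem.1
      have hlt : g x < f x := (hgf_iff x hxpos).mpr hxmem.2
      exact mul_le_mul_of_nonpos_left hlt.le (hp_in x ⟨hxI.1.le, hxI.2.le⟩)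
    · have hpge : 0 ≤ p x := hp_out x hxI
      have hle : f x ≤ g x := by
        rcases lt_trichotomy x 0 with h | h | h
        · rw [hfneg x h, hgneg x h]
        · exact absurd h hx0
        · by_contra hlt
          push_neg at hlt
          exact hxI (hIsub ⟨h, (hgf_iff x h).mp hlt⟩)
      exact mul_le_mul_of_nonneg_left hle hpge
  have hlf_int : Integrable (fun x => ℓ x * f x) := by
    refine (((integrable_pdf hk hrf).const_mul (φ x₁ - s * x₁)).add
      ((integrable_id_pdf hk hrf).const_mul s)).congr (ae_of_all _ fun x => ?_)
    simp only [Pi.add_apply, hℓdef]; ring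
  have hlg_int : Integrable (fun x => ℓ x * g x) := by
    refine (((integrable_pdf ha hra).const_mul (φ x₁ - s * x₁)).add
      ((integrable_id_pdf ha hra).const_mul s)).congr (ae_of_all _ fun x => ?_)
    simp only [Pi.add_apply, hℓdef]; ring
  have hpg_int : Integrable (fun x => p x * g x) := by
    refine (hgint.sub hlg_int).congr (ae_of_all _ fun x => ?_)
    simp only [Pi.add_apply, Pi.sub_apply, hpdef, hℓdef]; ring
  have hae : ∀ᵐ (x : ℝ), x ≠ 0 := by
    rw [ae_iff]
    have he : {x : ℝ | ¬ x ≠ 0} = {0} := by ext x; simp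
    rw [he]
    exact measure_singleton 0
  have hpf_meas : AEStronglyMeasurable (fun x => p x * f x) volume :=
    (hpcont.measurable.mul (measurable_gammaPDFReal _ _)).aestronglyMeasurable
  have hpf_int : Integrable (fun x => p x * f x) := by
    refine Integrable.mono (((integrable_pdf hk hrf).const_mul M).add hpg_int.abs)
      hpf_meas ?_
    filter_upwards [hae] with x hx
    rw [Real.norm_eq_abs, Real.norm_eq_abs]
    have h1 : p x * f x ≤ p x * g x := hpt x hx
    have h2 : -(M * f x) ≤ p x * f x := by
      have := mul_le_mul_of_nonneg_right (hp_lower x) (hfnn x)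
      linarith [this]
    have h3 : M * f x ≥ 0 := mul_nonneg (le_max_right M₀ 0) (hfnn x)
    have h4 : |p x * f x| ≤ M * f x + |p x * g x| := by
      rw [abs_le]
      constructor
      · have := neg_abs_le (p x * g x)
        have habs := abs_nonneg (p x * g x)
        linarith
      · have := le_abs_self (p x * g x)
        linarith
    exact h4.trans (le_abs_self _)
  have hfφ_int : Integrable (fun x => f x * φ x) := by
    refine (hpf_int.add hlf_int).congr (ae_of_all _ fun x => ?_)
    simp only [Pi.add_apply, Pi.sub_apply, hpdef, hℓdef]; ring
  refine ⟨hfφ_int, ?_⟩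
  have hmono : ∫ x, p x * f x ≤ ∫ x, p x * g x := by
    refine integral_mono_ae hpf_int hpg_int ?_
    filter_upwards [hae] with x hx
    exact hpt x hx
  have hℓf : ∫ x, ℓ x * f x = (φ x₁ - s * x₁) + s * μ := by
    have : (fun x => ℓ x * f x)
        = fun x => (φ x₁ - s * x₁) * f x + s * (x * f x) := by
      funext x; simp only [Pi.add_apply, hℓdef]; ring
    rw [this, integral_add ((integrable_pdf hk hrf).const_mul _)
      ((integrable_id_pdf hk hrf).const_mul _), integral_const_mul, integral_const_mul,
      integral_pdf_one hk hrf, integral_id_pdf hk hrf]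
    rw [mul_one]
    congr 2
    field_simp
  have hℓg : ∫ x, ℓ x * g x = (φ x₁ - s * x₁) + s * μ := by
    have : (fun x => ℓ x * g x)
        = fun x => (φ x₁ - s * x₁) * g x + s * (x * g x) := by
      funext x; simp only [Pi.add_apply, hℓdef]; ring
    rw [this, integral_add ((integrable_pdf ha hra).const_mul _)
      ((integrable_id_pdf ha hra).const_mul _), integral_const_mul, integral_const_mul,
      integral_pdf_one ha hra, integral_id_pdf ha hra]
    rw [mul_one]
    congr 2
    field_simp
  have hsplitf : ∫ x, f x * φ x = (∫ x, p x * f x) + ∫ x, ℓ x * f x := by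
    rw [← integral_add hpf_int hlf_int]
    refine integral_congr_ae (ae_of_all _ fun x => ?_)
    simp only [Pi.add_apply, Pi.sub_apply, hpdef, hℓdef]; ring
  have hsplitg : ∫ x, g x * φ x = (∫ x, p x * g x) + ∫ x, ℓ x * g x := by
    rw [← integral_add hpg_int hlg_int]
    refine integral_congr_ae (ae_of_all _ fun x => ?_)
    simp only [Pi.add_apply, Pi.sub_apply, hpdef, hℓdef]; ring
  rw [hsplitf, hsplitg, hℓf, hℓg]
  linarith



end Cor51

open Cor51

/-- **Convex order under the Zhu (2011) parametrization
(part ii of Corollary 5.1 of the paper).**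
Let `a, b > 0`, `z ≥ 0`, `Δ ∈ (0,1]`, `c ≥ 0`, `Θ ∼ Gamma(a+z, b)` and `Y ∼ Gamma(a, b′)`
with `b′ = ab/(Δ(a+z) + cb)` (so `E[Y] = Δ(a+z)/b + c`). Then `ΔΘ + c ⪯_cx Y`: the means
agree and `E[φ(ΔΘ + c)] ≤ E[φ(Y)]` for every convex `φ` with both sides integrable. -/
theorem stmt_13 {Ω : Type*} [mΩ : MeasurableSpace Ω] (P : Measure Ω) [IsProbabilityMeasure P]
    (a b z Δ c : ℝ) (ha : 0 < a) (hb : 0 < b) (hz : 0 ≤ z)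
    (hΔ : Δ ∈ Set.Ioc (0 : ℝ) 1) (hc : 0 ≤ c)
    (Θ Y : Ω → ℝ) (hΘmeas : Measurable Θ) (hYmeas : Measurable Y)
    (hΘ : Measure.map Θ P = gammaMeasure (a + z) b)
    (hY : Measure.map Y P = gammaMeasure a (a * b / (Δ * (a + z) + c * b))) :
    (∫ ω, (Δ * Θ ω + c) ∂P = ∫ ω, Y ω ∂P)
    ∧ ∀ φ : ℝ → ℝ, ConvexOn ℝ Set.univ φ →
        Integrable (fun ω => φ (Δ * Θ ω + c)) P → Integrable (fun ω => φ (Y ω)) P →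
        ∫ ω, φ (Δ * Θ ω + c) ∂P ≤ ∫ ω, φ (Y ω) ∂P := by
  obtain ⟨hΔ0, hΔ1⟩ := hΔ
  have hk : 0 < a + z := by linarith
  have hD : 0 < Δ * (a + z) + c * b := by positivity
  set k : ℝ := a + z with hkdef
  set D : ℝ := Δ * k + c * b with hDdef
  set μm : ℝ := D / b with hμmdef
  have hμm : 0 < μm := div_pos hD hb
  have hb'eq : a * b / D = a / μm := by
    rw [hμmdef, div_div_eq_mul_div]
  have ht : 0 < D / k := div_pos hD hk
  set t : ℝ := D / k with htdef
  have hbt : b / t = k / μm := by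
    rw [htdef, hμmdef]
    field_simp
  have hlam0 : 0 < Δ / t := div_pos hΔ0 ht
  have hlam1 : Δ / t ≤ 1 := by
    rw [div_le_one ht, htdef, le_div_iff₀ hk]
    nlinarith [mul_nonneg hc hb.le]
  have hclam : (1 - Δ / t) * μm = c := by
    rw [htdef, hμmdef]
    field_simp
    ring
  -- mean of Θ
  have hid_int_b : Integrable (fun x => x) (gammaMeasure k b) := by
    rw [integrable_gamma_iff hk hb]
    exact (integrable_id_pdf hk hb).congr (ae_of_all _ fun x => by ring)
  have hΘint : Integrable Θ P := by
    have h1 : Integrable (fun x => x) (Measure.map Θ P) := by rw [hΘ]; exact hid_int_b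
    exact (integrable_map_measure aestronglyMeasurable_id hΘmeas.aemeasurable).mp h1
  have hΘmean : ∫ ω, Θ ω ∂P = k / b := by
    have h1 : ∫ x, x ∂(Measure.map Θ P) = ∫ ω, Θ ω ∂P :=
      integral_map hΘmeas.aemeasurable aestronglyMeasurable_id
    rw [← h1, hΘ, integral_gamma hk hb]
    rw [show (fun x => gammaPDFReal k b x * x) = fun x => x * gammaPDFReal k b x by
      funext x; ring]
    exact integral_id_pdf hk hb
  have hYmean : ∫ ω, Y ω ∂P = μm := by
    have h1 : ∫ x, x ∂(Measure.map Y P) = ∫ ω, Y ω ∂P :=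
      integral_map hYmeas.aemeasurable aestronglyMeasurable_id
    rw [← h1, hY, hb'eq, integral_gamma ha (div_pos ha hμm)]
    rw [show (fun x => gammaPDFReal a (a / μm) x * x)
        = fun x => x * gammaPDFReal a (a / μm) x by funext x; ring]
    rw [integral_id_pdf ha (div_pos ha hμm)]
    field_simp
  constructor
  · rw [integral_add (hΘint.const_mul Δ) (integrable_const c), integral_const]
    simp only [probReal_univ, ENNReal.toReal_one, smul_eq_mul, one_mul]
    rw [integral_const_mul, hΘmean, hYmean, hμmdef, hDdef]
    field_simp
  · intro φ hφ hI1 hI2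
    have hφc : Continuous φ := continuousOn_univ.mp (hφ.continuousOn isOpen_univ)
    have hra : 0 < a / μm := div_pos ha hμm
    have hrf : 0 < k / μm := div_pos hk hμm
    -- transfer of the Y side
    have hY' : ∫ ω, φ (Y ω) ∂P = ∫ x, gammaPDFReal a (a / μm) x * φ x := by
      rw [← integral_map hYmeas.aemeasurable hφc.aestronglyMeasurable, hY, hb'eq,
        integral_gamma ha hra]
    have hgφ_int : Integrable (fun x => gammaPDFReal a (a / μm) x * φ x) := by
      have h1 : Integrable φ (Measure.map Y P) :=
        (integrable_map_measure hφc.aestronglyMeasurable hYmeas.aemeasurable).mpr hI2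
      rw [hY, hb'eq, integrable_gamma_iff ha hra] at h1
      exact h1
    obtain ⟨hfφ_int, hkey⟩ := key ha (by linarith : a ≤ k) hμm hφ hgφ_int
    -- scaling step
    have h1 : ∀ x, gammaPDFReal k b x * φ (t * x)
        = t * ((fun y => gammaPDFReal k (k / μm) y * φ y) (t * x)) := by
      intro x
      rw [pdf_scale hk hb ht x, hbt]
      ring
    have hscale : ∫ x, φ (t * x) ∂(gammaMeasure k b)
        = ∫ x, gammaPDFReal k (k / μm) x * φ x := by
      rw [integral_gamma hk hb]
      simp_rw [h1]
      rw [integral_const_mul, MeasureTheory.Measure.integral_comp_mul_left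
        (fun y => gammaPDFReal k (k / μm) y * φ y) t, abs_of_pos (inv_pos.mpr ht),
        smul_eq_mul]
      field_simp
    have hft_int : Integrable (fun x => φ (t * x)) (gammaMeasure k b) := by
      rw [integrable_gamma_iff hk hb]
      exact ((hfφ_int.comp_mul_left' ht.ne').const_mul t).congr
        (ae_of_all _ fun x => (h1 x).symm)
    -- transfer of the Θ side
    have hmsΔ : Continuous (fun x : ℝ => φ (Δ * x + c)) :=
      hφc.comp ((continuous_const.mul continuous_id).add continuous_const)
    have hL : ∫ ω, φ (Δ * Θ ω + c) ∂P = ∫ x, φ (Δ * x + c) ∂(gammaMeasure k b) := by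
      rw [← hΘ, integral_map hΘmeas.aemeasurable hmsΔ.aestronglyMeasurable]
    have hLint : Integrable (fun x => φ (Δ * x + c)) (gammaMeasure k b) := by
      have h2 : Integrable (fun x => φ (Δ * x + c)) (Measure.map Θ P) :=
        (integrable_map_measure hmsΔ.aestronglyMeasurable hΘmeas.aemeasurable).mpr hI1
      rwa [hΘ] at h2
    -- pointwise Jensen for the shift
    have hjen : ∀ x, φ (Δ * x + c) ≤ (Δ / t) * φ (t * x) + (1 - Δ / t) * φ μm := by
      intro x
      have hcomb := hφ.2 (Set.mem_univ (t * x)) (Set.mem_univ μm) hlam0.le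
        (by linarith : (0:ℝ) ≤ 1 - Δ / t) (by ring)
      have harg : ((Δ / t) • (t * x) + (1 - Δ / t) • μm : ℝ) = Δ * x + c := by
        simp only [smul_eq_mul]
        rw [show Δ / t * (t * x) = Δ * x by field_simp, hclam]
      rw [harg] at hcomb
      simpa [smul_eq_mul] using hcomb
    have hprob_b : IsProbabilityMeasure (gammaMeasure k b) := isProbabilityMeasure_gammaMeasure hk hb
    have hmono : ∫ x, φ (Δ * x + c) ∂(gammaMeasure k b)
        ≤ ∫ x, ((Δ / t) * φ (t * x) + (1 - Δ / t) * φ μm) ∂(gammaMeasure k b) :=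
      integral_mono hLint ((hft_int.const_mul _).add (integrable_const _))
        (fun x => hjen x)
    have hsplit : ∫ x, ((Δ / t) * φ (t * x) + (1 - Δ / t) * φ μm) ∂(gammaMeasure k b)
        = (Δ / t) * (∫ x, gammaPDFReal k (k / μm) x * φ x) + (1 - Δ / t) * φ μm := by
      rw [integral_add (hft_int.const_mul _) (integrable_const _), integral_const_mul,
        hscale, integral_const]
      simp [measure_univ]
    -- Jensen : φ μm ≤ ∫ g φ
    have hprob_a : IsProbabilityMeasure (gammaMeasure a (a / μm)) :=
      isProbabilityMeasure_gammaMeasure ha hra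
    have hid_int_a : Integrable (fun x => x) (gammaMeasure a (a / μm)) := by
      rw [integrable_gamma_iff ha hra]
      exact (integrable_id_pdf ha hra).congr (ae_of_all _ fun x => by ring)
    have hφ_int_a : Integrable φ (gammaMeasure a (a / μm)) := by
      rw [integrable_gamma_iff ha hra]; exact hgφ_int
    have hmean_a : ∫ x, x ∂(gammaMeasure a (a / μm)) = μm := by
      rw [integral_gamma ha hra,
        show (fun x => gammaPDFReal a (a / μm) x * x)
          = fun x => x * gammaPDFReal a (a / μm) x by funext x; ring,
        integral_id_pdf ha hra]
      field_simp
    have hjen2 : φ μm ≤ ∫ x, gammaPDFReal a (a / μm) x * φ x := by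
      have h3 := hφ.map_integral_le hφc.continuousOn isClosed_univ
        (ae_of_all _ fun x => Set.mem_univ x) hid_int_a
        (by exact hφ_int_a : Integrable (φ ∘ fun x => x) (gammaMeasure a (a / μm)))
      rw [hmean_a] at h3
      calc φ μm ≤ ∫ x, φ x ∂(gammaMeasure a (a / μm)) := h3
        _ = _ := integral_gamma ha hra φ
    -- assemble
    rw [hL, hY']
    calc ∫ x, φ (Δ * x + c) ∂(gammaMeasure k b)
        ≤ (Δ / t) * (∫ x, gammaPDFReal k (k / μm) x * φ x) + (1 - Δ / t) * φ μm := by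
          rw [← hsplit]; exact hmono
      _ ≤ (Δ / t) * (∫ x, gammaPDFReal a (a / μm) x * φ x)
          + (1 - Δ / t) * (∫ x, gammaPDFReal a (a / μm) x * φ x) := by
          have e1 := mul_le_mul_of_nonneg_left hkey hlam0.le
          have e2 := mul_le_mul_of_nonneg_left hjen2 (by linarith : (0:ℝ) ≤ 1 - Δ / t)
          linarith
      _ = ∫ x, gammaPDFReal a (a / μm) x * φ x := by ring
end

section
/- Let μ > 0, let (Δ_t)_{t≥0} ⊆ [0, 1] and (π_t)_{t≥0} ⊆ [0, 1] be sequences with Δ_0 > 0 and π_0 > 0, and define the sequence (v_t)_{t≥0} by v_0 = μ and v_{t+1} = Δ_t² v_t + μ(1 − Δ_t²(1 − π_t)) for all t ≥ 0. Then v_t = v_1 for all t ≥ 1 if and only if Δ_t² = Δ_0² π_0 / (Δ_0² π_0 + π_t) for all t ≥ 1. -/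
/-- **Variance-stationarity characterization for the anchored Poisson-INGARCH(1,1) model.**
Let `μ > 0`, let `(Δ_t)_{t≥0} ⊆ [0,1]` and `(π_t)_{t≥0} ⊆ [0,1]` with `Δ_0 > 0` and `π_0 > 0`,
and define `v_0 = μ`, `v_{t+1} = Δ_t² v_t + μ (1 − Δ_t² (1 − π_t))`. Then `v_t = v_1` for all
`t ≥ 1` if and only if `Δ_t² = Δ_0² π_0 / (Δ_0² π_0 + π_t)` for all `t ≥ 1`. -/
theorem stmt_15 (μ : ℝ) (hμ : 0 < μ) (Δ π : ℕ → ℝ)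
    (hΔ : ∀ t, Δ t ∈ Set.Icc (0 : ℝ) 1) (hπ : ∀ t, π t ∈ Set.Icc (0 : ℝ) 1)
    (hΔ0 : 0 < Δ 0) (hπ0 : 0 < π 0)
    (v : ℕ → ℝ) (hv0 : v 0 = μ)
    (hv : ∀ t, v (t + 1) = (Δ t) ^ 2 * v t + μ * (1 - (Δ t) ^ 2 * (1 - π t))) :
    (∀ t ≥ 1, v t = v 1) ↔
      (∀ t ≥ 1, (Δ t) ^ 2 = (Δ 0) ^ 2 * π 0 / ((Δ 0) ^ 2 * π 0 + π t)) := by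
  set D := (Δ 0) ^ 2 * π 0 with hD
  have hDpos : 0 < D := mul_pos (pow_pos hΔ0 2) hπ0
  have hden : ∀ t, 0 < D + π t := fun t => by have := (hπ t).1; linarith
  have hv1 : v 1 = μ + μ * D := by rw [hv 0, hv0]; ring
  have key : ∀ t, v (t + 1) = μ + μ * ((Δ t) ^ 2 * (D + π t)) + (Δ t) ^ 2 * (v t - v 1) := by
    intro t; rw [hv t, hv1]; ring
  constructor
  · intro h t ht
    have h1 : v (t + 1) = v 1 := h (t + 1) (by omega)
    have h2 : v t = v 1 := h t ht
    have hk := key t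
    rw [h2, hv1, sub_self, mul_zero, add_zero] at hk
    have heq : (Δ t) ^ 2 * (D + π t) = D := by
      have : μ * ((Δ t) ^ 2 * (D + π t)) = μ * D := by linarith
      exact mul_left_cancel₀ hμ.ne' this
    field_simp [(hden t).ne']
    linarith
  · intro h t ht
    induction t with
    | zero => omega
    | succ n ih =>
      rcases Nat.lt_or_ge n 1 with h1 | h1
      · interval_cases n
        · rfl
      · have hvn : v n = v 1 := ih h1
        have heq : (Δ n) ^ 2 * (D + π n) = D := by
          have hn := h n h1
          rw [hn, div_mul_cancel₀ _ (hden n).ne']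
        rw [key n, hvn, sub_self, mul_zero, add_zero, heq, hv1]
end

section
/- Let a > 0 and let (Δ_t)_{t≥1} ⊆ [0, 1] and (e_t)_{t≥1} ⊆ [0, ∞) be sequences. Define recursively: b⁻_1 = a; for t ≥ 1, b_t = b⁻_t + e_t, q_t = 1/(Δ_t² + (1 − Δ_t²)·(b_t/a)), and b⁻_{t+1} = q_t · b_t. Then for every t ≥ 1: b_t ≥ a, q_t ≤ 1, and Δ_t · b⁻_{t+1}/b_t ≤ 1. -/
/-- **Lemma A.1 of the paper.** Let `a > 0`, `(Δ_t)_{t≥1} ⊆ [0,1]`, `(e_t)_{t≥1} ⊆ [0,∞)`.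
Define `b⁻_1 = a`, and for `t ≥ 1`: `b_t = b⁻_t + e_t`,
`q_t = 1 / (Δ_t² + (1 − Δ_t²) (b_t / a))`, `b⁻_{t+1} = q_t b_t`.
Then for every `t ≥ 1`: `b_t ≥ a`, `q_t ≤ 1`, and `Δ_t · b⁻_{t+1} / b_t ≤ 1`. -/
theorem stmt_17 (a : ℝ) (ha : 0 < a) (Δ e : ℕ → ℝ)
    (hΔ : ∀ t ≥ 1, Δ t ∈ Set.Icc (0 : ℝ) 1) (he : ∀ t ≥ 1, 0 ≤ e t)
    (bminus b q : ℕ → ℝ)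
    (hb1 : bminus 1 = a)
    (hb : ∀ t ≥ 1, b t = bminus t + e t)
    (hq : ∀ t ≥ 1, q t = 1 / ((Δ t) ^ 2 + (1 - (Δ t) ^ 2) * (b t / a)))
    (hbnext : ∀ t ≥ 1, bminus (t + 1) = q t * b t) :
    ∀ t ≥ 1, a ≤ b t ∧ q t ≤ 1 ∧ Δ t * bminus (t + 1) / b t ≤ 1 := by
  have step : ∀ t, 1 ≤ t → a ≤ bminus t →
      a ≤ b t ∧ 0 < q t ∧ q t ≤ 1 ∧ a ≤ bminus (t + 1) := by
    intro t ht hbm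
    have hbt : a ≤ b t := by rw [hb t ht]; linarith [he t ht]
    obtain ⟨hΔ0, hΔ1⟩ := hΔ t ht
    have hΔsq : Δ t ^ 2 ≤ 1 := by nlinarith
    have hba : 1 ≤ b t / a := (one_le_div ha).mpr hbt
    have hD1 : 1 ≤ Δ t ^ 2 + (1 - Δ t ^ 2) * (b t / a) := by nlinarith
    have hDpos : 0 < Δ t ^ 2 + (1 - Δ t ^ 2) * (b t / a) := by linarith
    have hq1 : q t ≤ 1 := by
      rw [hq t ht, div_le_one hDpos]; exact hD1
    have hqpos : 0 < q t := by rw [hq t ht]; positivity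
    have hDle : Δ t ^ 2 + (1 - Δ t ^ 2) * (b t / a) ≤ b t / a := by nlinarith
    have hnext : a ≤ bminus (t + 1) := by
      rw [hbnext t ht, hq t ht, one_div, ← div_eq_inv_mul, le_div_iff₀ hDpos]
      calc a * (Δ t ^ 2 + (1 - Δ t ^ 2) * (b t / a)) ≤ a * (b t / a) := by
            exact mul_le_mul_of_nonneg_left hDle ha.le
        _ = b t := by field_simp
    exact ⟨hbt, hqpos, hq1, hnext⟩
  have key : ∀ t, 1 ≤ t → a ≤ bminus t := by
    intro t ht
    induction t with
    | zero => omega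
    | succ n ih =>
      rcases Nat.lt_or_ge 1 (n + 1) with h | h
      · have hn : 1 ≤ n := by omega
        exact (step n hn (ih hn)).2.2.2
      · have : n + 1 = 1 := by omega
        rw [this, hb1]
  intro t ht
  obtain ⟨hbt, hqpos, hq1, _⟩ := step t ht (key t ht)
  refine ⟨hbt, hq1, ?_⟩
  obtain ⟨hΔ0, hΔ1⟩ := hΔ t ht
  have hbpos : 0 < b t := lt_of_lt_of_le ha hbt
  rw [hbnext t ht]
  rw [div_le_one hbpos]
  calc Δ t * (q t * b t) = (Δ t * q t) * b t := by ring
    _ ≤ 1 * b t := by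
        apply mul_le_mul_of_nonneg_right _ hbpos.le
        exact mul_le_one₀ hΔ1 hqpos.le hq1
    _ = b t := one_mul _
end
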